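/- arXiv:2510.05170 — 6 statements merged into one kernel-verified Lean document; each statement's English description precedes it below -/
import Mathlib

section
/- For the path P_n with n ≥ 3, if 2^{n-1} - 3 pebbles are placed on v_1 and 1 pebble is placed on v_n (with no pebbles elsewhere), then no sequence of pebbling moves produces a configuration in which every vertex of some strong hub set of P_n has a pebble. In particular, h_s^*(P_n) ≥ 2^{n-1} - 1. -/
open SimpleGraph

/-- `U` is a strong hub set: nonempty, and any two vertices are joined by a path
whose internal vertices all lie in `U`. -/
def IsStrongHubSet {V : Type*} (G : SimpleGraph V) (U : Set V) : Prop :=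
  U.Nonempty ∧ ∀ x y : V, ∃ p : G.Walk x y, p.IsPath ∧
    ∀ v ∈ p.support.tail.dropLast, v ∈ U

/-- `U` is a hub set: nonempty, and any two vertices outside `U` are joined by a path
whose internal vertices all lie in `U`. -/
def IsHubSet {V : Type*} (G : SimpleGraph V) (U : Set V) : Prop :=
  U.Nonempty ∧ ∀ x y : V, x ∉ U → y ∉ U → ∃ p : G.Walk x y, p.IsPath ∧
    ∀ v ∈ p.support.tail.dropLast, v ∈ U

/-- A single pebbling move: remove two pebbles from `u`, add one to a neighbor `v`. -/
def PebblingMove {V : Type*} [DecidableEq V] (G : SimpleGraph V) (c c' : V → ℕ) : Prop :=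
  ∃ u v : V, G.Adj u v ∧ 2 ≤ c u ∧
    c' = fun w => if w = u then c u - 2 else if w = v then c v + 1 else c w

/-- Reachability by a sequence of pebbling moves. -/
def PebblingReach {V : Type*} [DecidableEq V] (G : SimpleGraph V) : (V → ℕ) → (V → ℕ) → Prop :=
  Relation.ReflTransGen (PebblingMove G)

/-- A configuration covers a set when every vertex of the set has a pebble. -/
def Covers {V : Type*} (c : V → ℕ) (U : Set V) : Prop := ∀ v ∈ U, 1 ≤ c v

namespace Stmt6Aux

/-- Weight of `m` pebbles on vertex `i` of the path on `n` vertices. -/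
def gwt (n i m : ℕ) : ℕ := if i = n - 1 then 2 ^ (n - 2) * (m - 1) else 2 ^ i * m

def psi (n : ℕ) (c : Fin n → ℕ) : ℕ := ∑ i : Fin n, gwt n i.val (c i)

lemma key (n : ℕ) (hn : 3 ≤ n) {a b : ℕ} (ha : a < n) (hb : b < n)
    (hadj : a + 1 = b ∨ b + 1 = a) (cu cv : ℕ) (hcu : 2 ≤ cu) :
    gwt n a (cu - 2) + gwt n b (cv + 1) ≤ gwt n a cu + gwt n b cv := by
  unfold gwt
  by_cases hb1 : b = n - 1
  · have ha1 : a = n - 2 := by omega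
    have ha2 : ¬ (a = n - 1) := by omega
    rw [if_pos hb1, if_neg ha2, if_pos hb1, if_neg ha2, ha1,
      ← Nat.mul_add, ← Nat.mul_add]
    exact Nat.mul_le_mul_left _ (by omega)
  · by_cases ha1 : a = n - 1
    · have hb2 : b = n - 2 := by omega
      rw [if_pos ha1, if_neg hb1, if_pos ha1, if_neg hb1, hb2,
        ← Nat.mul_add, ← Nat.mul_add]
      exact Nat.mul_le_mul_left _ (by omega)
    · rw [if_neg ha1, if_neg hb1, if_neg ha1, if_neg hb1]
      have h2b : 2 ^ b ≤ 2 ^ a * 2 := by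
        rw [← pow_succ]
        exact Nat.pow_le_pow_right (by norm_num) (by omega)
      have e1 : 2 ^ b * (cv + 1) = 2 ^ b * cv + 2 ^ b := by ring
      have e2 : 2 ^ a * cu = 2 ^ a * (cu - 2) + 2 ^ a * 2 := by
        rw [← Nat.mul_add]; congr 1; omega
      rw [e1, e2]
      linarith

lemma psi_move {n : ℕ} (hn : 3 ≤ n) {c c' : Fin n → ℕ}
    (h : PebblingMove (pathGraph n) c c') : psi n c' ≤ psi n c := by
  obtain ⟨u, v, hadj, hcu, hc'⟩ := h
  have huv : u ≠ v := (pathGraph n).ne_of_adj hadj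
  have hvu : v ≠ u := huv.symm
  have hadj' := pathGraph_adj.mp hadj
  have hcu' : c' u = c u - 2 := by rw [hc']; simp
  have hcv' : c' v = c v + 1 := by rw [hc']; simp [hvu]
  have hci : ∀ i : Fin n, i ≠ u → i ≠ v → c' i = c i := by
    intro i h1 h2; rw [hc']; simp [h1, h2]
  have hvmem : v ∈ Finset.univ.erase u := Finset.mem_erase.mpr ⟨hvu, Finset.mem_univ v⟩
  have split : ∀ F : Fin n → ℕ,
      ∑ i, F i = F u + (F v + ∑ i ∈ (Finset.univ.erase u).erase v, F i) := by
    intro F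
    rw [← Finset.add_sum_erase _ F (Finset.mem_univ u), ← Finset.add_sum_erase _ F hvmem]
  unfold psi
  rw [split (fun i => gwt n i.val (c' i)), split (fun i => gwt n i.val (c i))]
  beta_reduce
  rw [hcu', hcv']
  have hrest : ∑ i ∈ (Finset.univ.erase u).erase v, gwt n i.val (c' i)
      = ∑ i ∈ (Finset.univ.erase u).erase v, gwt n i.val (c i) := by
    refine Finset.sum_congr rfl ?_
    intro i hi
    have h2 := Finset.mem_erase.mp hi
    have h1 := Finset.mem_erase.mp h2.2
    rw [hci i h1.1 h2.1]
  rw [hrest]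
  have hk := key n hn u.isLt v.isLt hadj' (c u) (c v) hcu
  linarith

lemma psi_reach {n : ℕ} (hn : 3 ≤ n) {c c' : Fin n → ℕ}
    (h : PebblingReach (pathGraph n) c c') : psi n c' ≤ psi n c := by
  induction h with
  | refl => exact le_refl _
  | tail _ hbc ih => exact le_trans (psi_move hn hbc) ih

lemma ivt {n : ℕ} : ∀ {x y : Fin n} (p : (pathGraph n).Walk x y) (m : ℕ),
    (x.val ≤ m ∧ m ≤ y.val ∨ y.val ≤ m ∧ m ≤ x.val) → ∃ z ∈ p.support, z.val = m := by
  intro x y p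
  induction p with
  | @nil a => intro m hm; exact ⟨a, by simp, by omega⟩
  | @cons a b y h q ih =>
    intro m hm
    by_cases hc : b.val ≤ m ∧ m ≤ y.val ∨ y.val ≤ m ∧ m ≤ b.val
    · obtain ⟨z, hz, hzm⟩ := ih m hc
      exact ⟨z, by simp [Walk.support_cons, hz], hzm⟩
    · have hadj := pathGraph_adj.mp h
      have hma : m = a.val := by omega
      exact ⟨a, by simp, hma.symm⟩

lemma mem_dropLast_support {V : Type*} {G : SimpleGraph V} :
    ∀ {x y : V} (p : G.Walk x y) (z : V), z ∈ p.support → z ≠ y → z ∈ p.support.dropLast := by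
  intro x y p
  induction p with
  | nil => intro z hz hzy; simp at hz; exact absurd hz hzy
  | @cons a b y h q ih =>
    intro z hz hzy
    rw [Walk.support_cons] at hz ⊢
    rw [List.dropLast_cons_of_ne_nil q.support_ne_nil]
    rcases List.mem_cons.mp hz with h1 | h1
    · rw [h1]; exact List.mem_cons_self
    · exact List.mem_cons_of_mem _ (ih z h1 hzy)

lemma mem_internal {V : Type*} {G : SimpleGraph V} {x y : V} (p : G.Walk x y) (z : V)
    (hz : z ∈ p.support) (hzx : z ≠ x) (hzy : z ≠ y) : z ∈ p.support.tail.dropLast := by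
  cases p with
  | nil => simp at hz; exact absurd hz hzx
  | cons h q =>
    rw [Walk.support_cons] at hz ⊢
    rcases List.mem_cons.mp hz with h1 | h1
    · exact absurd h1 hzx
    · rw [List.tail_cons]
      exact mem_dropLast_support q z h1 hzy

lemma hub_contains {n : ℕ} (hn : 3 ≤ n) {U : Set (Fin n)}
    (hU : IsStrongHubSet (pathGraph n) U) (k : ℕ) (h1 : 1 ≤ k) (h2 : k ≤ n - 2) :
    (⟨k, by omega⟩ : Fin n) ∈ U := by
  obtain ⟨-, hpath⟩ := hU
  obtain ⟨p, hp, hint⟩ := hpath ⟨k - 1, by omega⟩ ⟨k + 1, by omega⟩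
  obtain ⟨z, hz, hzm⟩ := ivt p k (Or.inl ⟨by show k - 1 ≤ k; omega, by show k ≤ k + 1; omega⟩)
  have hzx : z ≠ ⟨k - 1, by omega⟩ := by
    intro he
    have hv : z.val = k - 1 := by rw [he]
    omega
  have hzy : z ≠ ⟨k + 1, by omega⟩ := by
    intro he
    have hv : z.val = k + 1 := by rw [he]
    omega
  have hzk : z = ⟨k, by omega⟩ := Fin.ext hzm
  rw [← hzk]
  exact hint z (mem_internal p z hz hzx hzy)

lemma geo : ∀ k : ℕ, ∑ i ∈ Finset.range k, 2 ^ i = 2 ^ k - 1 := by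
  intro k
  induction k with
  | zero => simp
  | succ k ih =>
    have h1 : (1:ℕ) ≤ 2 ^ k := Nat.one_le_two_pow
    rw [Finset.sum_range_succ, ih, pow_succ]
    omega

lemma psi_cover {n : ℕ} (hn : 3 ≤ n) {c : Fin n → ℕ} {U : Set (Fin n)}
    (hU : IsStrongHubSet (pathGraph n) U) (hc : Covers c U) :
    2 ^ (n - 1) - 2 ≤ psi n c := by
  have hterm : ∀ i : Fin n,
      (if 1 ≤ i.val ∧ i.val ≤ n - 2 then 2 ^ i.val else 0) ≤ gwt n i.val (c i) := by
    intro i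
    by_cases hi : 1 ≤ i.val ∧ i.val ≤ n - 2
    · rw [if_pos hi]
      have hmem := hub_contains hn hU i.val hi.1 hi.2
      have heta : (⟨i.val, by omega⟩ : Fin n) = i := rfl
      rw [heta] at hmem
      have hc1 : 1 ≤ c i := hc i hmem
      unfold gwt
      rw [if_neg (by omega)]
      calc 2 ^ i.val = 2 ^ i.val * 1 := (mul_one _).symm
        _ ≤ 2 ^ i.val * c i := Nat.mul_le_mul_left _ hc1
    · rw [if_neg hi]; exact Nat.zero_le _
  have hsum := Finset.sum_le_sum (fun i (_ : i ∈ Finset.univ) => hterm i)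
  have hval : (∑ i : Fin n, if 1 ≤ i.val ∧ i.val ≤ n - 2 then 2 ^ i.val else 0)
      = 2 ^ (n - 1) - 2 := by
    obtain ⟨m, rfl⟩ : ∃ m, n = m + 3 := ⟨n - 3, by omega⟩
    rw [Fin.sum_univ_eq_sum_range (fun j => if 1 ≤ j ∧ j ≤ m + 3 - 2 then 2 ^ j else 0) (m + 3)]
    have hgoal : (2:ℕ) ^ (m + 3 - 1) - 2 = 2 * (2 ^ (m + 1) - 1) := by
      have h1 : (1:ℕ) ≤ 2 ^ (m + 1) := Nat.one_le_two_pow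
      have h2 : (2:ℕ) ^ (m + 3 - 1) = 2 * 2 ^ (m + 1) := by
        rw [show m + 3 - 1 = (m + 1) + 1 by omega, pow_succ]; ring
      omega
    rw [hgoal]
    rw [Finset.sum_range_succ]
    rw [if_neg (by omega)]
    rw [Finset.sum_range_succ']
    rw [if_neg (by omega)]
    have hcongr : (∑ i ∈ Finset.range (m + 1), if 1 ≤ i + 1 ∧ i + 1 ≤ m + 3 - 2 then 2 ^ (i + 1) else 0)
        = ∑ i ∈ Finset.range (m + 1), 2 * 2 ^ i := by
      refine Finset.sum_congr rfl ?_
      intro i hi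
      have := Finset.mem_range.mp hi
      rw [if_pos (by omega), pow_succ]
      ring
    rw [hcongr, ← Finset.mul_sum, geo]
    omega
  unfold psi
  exact le_trans (le_of_eq hval.symm) hsum

lemma psi_eq {n : ℕ} (hn : 3 ≤ n) (c : Fin n → ℕ) (A : ℕ)
    (h0 : c ⟨0, by omega⟩ = A)
    (hlast : c ⟨n - 1, by omega⟩ ≤ 1)
    (hother : ∀ i : Fin n, i.val ≠ 0 → i.val ≠ n - 1 → c i = 0) :
    psi n c = A := by
  have hterm : ∀ i : Fin n, gwt n i.val (c i) = if i.val = 0 then A else 0 := by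
    intro i
    by_cases h0' : i.val = 0
    · rw [if_pos h0']
      have hie : i = ⟨0, by omega⟩ := Fin.ext h0'
      unfold gwt
      rw [if_neg (by omega), h0', hie, h0, pow_zero, one_mul]
    · rw [if_neg h0']
      unfold gwt
      by_cases hl : i.val = n - 1
      · rw [if_pos hl]
        have hie : i = ⟨n - 1, by omega⟩ := Fin.ext hl
        have hc1 : c i ≤ 1 := by rw [hie]; exact hlast
        rw [show c i - 1 = 0 from by omega, mul_zero]
      · rw [if_neg hl, hother i h0' hl, mul_zero]
  unfold psi
  rw [Finset.sum_congr rfl (fun i _ => hterm i)]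
  rw [Fin.sum_univ_eq_sum_range (fun j => if j = 0 then A else 0) n]
  rw [Finset.sum_ite_eq' (Finset.range n) 0 (fun _ => A)]
  rw [if_pos (Finset.mem_range.mpr (by omega))]

lemma sum_ind {n : ℕ} (k : ℕ) (hk : k < n) (A : ℕ) :
    ∑ i : Fin n, (if i.val = k then A else 0) = A := by
  rw [Fin.sum_univ_eq_sum_range (fun j => if j = k then A else 0) n]
  rw [Finset.sum_ite_eq' (Finset.range n) k (fun _ => A)]
  rw [if_pos (Finset.mem_range.mpr hk)]

lemma main {n : ℕ} (hn : 3 ≤ n) {c : Fin n → ℕ} (hψ : psi n c < 2 ^ (n - 1) - 2) :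
    ¬ ∃ c', PebblingReach (pathGraph n) c c' ∧
      ∃ U, IsStrongHubSet (pathGraph n) U ∧ Covers c' U := by
  rintro ⟨c', hreach, U, hU, hcov⟩
  have h1 := psi_reach hn hreach
  have h2 := psi_cover hn hU hcov
  omega

end Stmt6Aux

/-- The configuration with `2^(n-1) - 3` pebbles on `v_1` and one pebble on `v_n`
cannot be moved to cover a strong hub set of `P_n`; hence `h_s^*(P_n) ≥ 2^(n-1) - 1`. -/
theorem stmt6 (n : ℕ) (hn : 3 ≤ n) :
    (¬ ∃ c' : Fin n → ℕ,
      PebblingReach (pathGraph n)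
        (fun i => if (i : ℕ) = 0 then 2 ^ (n - 1) - 3 else if (i : ℕ) = n - 1 then 1 else 0) c' ∧
      ∃ U, IsStrongHubSet (pathGraph n) U ∧ Covers c' U) ∧
    ∀ t : ℕ, (∀ c : Fin n → ℕ, (∑ v, c v) = t →
        ∃ c', PebblingReach (pathGraph n) c c' ∧
          ∃ U, IsStrongHubSet (pathGraph n) U ∧ Covers c' U) →
      2 ^ (n - 1) - 1 ≤ t := by
  have hpow : 4 ≤ 2 ^ (n - 1) := by
    calc (4:ℕ) = 2 ^ 2 := by norm_num
      _ ≤ 2 ^ (n - 1) := Nat.pow_le_pow_right (by norm_num) (by omega)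
  constructor
  · apply Stmt6Aux.main hn
    have heq : Stmt6Aux.psi n
        (fun i : Fin n => if (i : ℕ) = 0 then 2 ^ (n - 1) - 3 else if (i : ℕ) = n - 1 then 1 else 0)
        = 2 ^ (n - 1) - 3 := by
      apply Stmt6Aux.psi_eq hn
      · show (if (0:ℕ) = 0 then 2 ^ (n - 1) - 3 else if (0:ℕ) = n - 1 then 1 else 0) = _
        rw [if_pos rfl]
      · show (if n - 1 = 0 then 2 ^ (n - 1) - 3 else if n - 1 = n - 1 then 1 else 0) ≤ 1
        rw [if_neg (by omega), if_pos rfl]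
      · intro i h1 h2
        show (if (i : ℕ) = 0 then 2 ^ (n - 1) - 3 else if (i : ℕ) = n - 1 then 1 else 0) = 0
        rw [if_neg h1, if_neg h2]
    rw [heq]
    omega
  · intro t ht
    by_contra hlt
    push_neg at hlt
    set c₀ : Fin n → ℕ :=
      fun i => if (i : ℕ) = n - 1 then min t 1 else if (i : ℕ) = 0 then t - 1 else 0 with hc₀
    have hsplit : ∀ i : Fin n,
        c₀ i = (if (i : ℕ) = n - 1 then min t 1 else 0) + (if (i : ℕ) = 0 then t - 1 else 0) := by
      intro i
      simp only [hc₀]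
      by_cases h1 : (i : ℕ) = n - 1
      · rw [if_pos h1, if_pos h1, if_neg (by omega), add_zero]
      · rw [if_neg h1, if_neg h1, zero_add]
    have hsum : ∑ v, c₀ v = t := by
      rw [Finset.sum_congr rfl (fun i _ => hsplit i), Finset.sum_add_distrib,
        Stmt6Aux.sum_ind (n - 1) (by omega) (min t 1),
        Stmt6Aux.sum_ind 0 (by omega) (t - 1)]
      omega
    obtain ⟨c', hreach, U, hU, hcov⟩ := ht c₀ hsum
    have h1 := Stmt6Aux.psi_reach hn hreach
    have h2 := Stmt6Aux.psi_cover hn hU hcov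
    have h3 : Stmt6Aux.psi n c₀ = t - 1 := by
      apply Stmt6Aux.psi_eq hn
      · show (if (0:ℕ) = n - 1 then min t 1 else if (0:ℕ) = 0 then t - 1 else 0) = _
        rw [if_neg (by omega), if_pos rfl]
      · show (if n - 1 = n - 1 then min t 1 else if n - 1 = 0 then t - 1 else 0) ≤ 1
        rw [if_pos rfl]
        omega
      · intro i hi1 hi2
        show (if (i : ℕ) = n - 1 then min t 1 else if (i : ℕ) = 0 then t - 1 else 0) = 0
        rw [if_neg hi2, if_neg hi1]
    omega
end

section
/- For any n ≥ 3, the strong hub cover pebbling number of the path P_n equals 2^{n-1} - 1. -/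
open SimpleGraph

namespace SHAux

variable {V : Type*} [DecidableEq V] {G : SimpleGraph V}

lemma move_add {c c' : V → ℕ} (e : V → ℕ) (h : PebblingMove G c c') :
    PebblingMove G (fun w => c w + e w) (fun w => c' w + e w) := by
  obtain ⟨u, v, hadj, hcu, rfl⟩ := h
  have huv : u ≠ v := hadj.ne
  refine ⟨u, v, hadj, by show 2 ≤ c u + e u; omega, ?_⟩
  funext w
  by_cases hw : w = u <;> by_cases hw2 : w = v <;>
    simp [hw, hw2, huv, huv.symm] <;> omega

lemma reach_add {c c' : V → ℕ} (e : V → ℕ) (h : PebblingReach G c c') :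
    PebblingReach G (fun w => c w + e w) (fun w => c' w + e w) := by
  have h' : Relation.ReflTransGen (PebblingMove G) c c' := h
  clear h
  induction h' with
  | refl => exact Relation.ReflTransGen.refl
  | tail _ hstep ih => exact Relation.ReflTransGen.tail ih (move_add e hstep)

lemma reach_add_left {c c' : V → ℕ} (e : V → ℕ) (h : PebblingReach G c c') :
    PebblingReach G (fun w => e w + c w) (fun w => e w + c' w) := by
  have h2 := reach_add e h
  have e1 : (fun w => e w + c w) = (fun w => c w + e w) := by funext w; omega
  have e2 : (fun w => e w + c' w) = (fun w => c' w + e w) := by funext w; omega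
  rw [e1, e2]; exact h2

lemma reach_halve_aux {u v : V} (hadj : G.Adj u v) :
    ∀ (k : ℕ) (c : V → ℕ), c u ≤ k → PebblingReach G c
      (fun w => if w = u then c u % 2 else if w = v then c v + c u / 2 else c w) := by
  have hne : u ≠ v := hadj.ne
  intro k
  induction k with
  | zero =>
    intro c hc
    have : (fun w => if w = u then c u % 2 else if w = v then c v + c u / 2 else c w) = c := by
      funext w
      by_cases hw : w = u <;> by_cases hw2 : w = v <;>
        simp [hw, hw2, hne, hne.symm] <;> omega
    rw [this]; exact Relation.ReflTransGen.refl
  | succ k ih =>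
    intro c hc
    by_cases h2 : c u < 2
    · have : (fun w => if w = u then c u % 2 else if w = v then c v + c u / 2 else c w) = c := by
        funext w
        by_cases hw : w = u <;> by_cases hw2 : w = v <;>
          simp [hw, hw2, hne, hne.symm] <;> omega
      rw [this]; exact Relation.ReflTransGen.refl
    · set c1 : V → ℕ := fun w => if w = u then c u - 2 else if w = v then c v + 1 else c w with hc1
      have hstep : PebblingMove G c c1 := ⟨u, v, hadj, by omega, rfl⟩
      have hc1u : c1 u = c u - 2 := by simp [hc1]
      have hc1v : c1 v = c v + 1 := by simp [hc1, hne.symm]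
      have hrec := ih c1 (by omega)
      have heq : (fun w => if w = u then c1 u % 2 else if w = v then c1 v + c1 u / 2 else c1 w)
          = (fun w => if w = u then c u % 2 else if w = v then c v + c u / 2 else c w) := by
        funext w
        by_cases hw : w = u
        · rw [if_pos hw, if_pos hw, hc1u]; omega
        · by_cases hw2 : w = v
          · rw [if_neg hw, if_neg hw, if_pos hw2, if_pos hw2, hc1v, hc1u]; omega
          · rw [if_neg hw, if_neg hw, if_neg hw2, if_neg hw2]
            simp [hc1, hw, hw2]
      rw [← heq]
      exact Relation.ReflTransGen.head hstep hrec

lemma reach_halve {u v : V} (hadj : G.Adj u v) (c : V → ℕ) :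
    PebblingReach G c
      (fun w => if w = u then c u % 2 else if w = v then c v + c u / 2 else c w) :=
  reach_halve_aux hadj (c u) c le_rfl


section FinPart

variable {n : ℕ}

def Ival (n a b : ℕ) : Set (Fin n) := {v | a ≤ v.val ∧ v.val ≤ b}

def Solv (n : ℕ) (c : Fin n → ℕ) (T : Set (Fin n)) : Prop :=
  ∃ c', PebblingReach (pathGraph n) c c' ∧ ∀ v ∈ T, 1 ≤ c' v

lemma solv_refl {c : Fin n → ℕ} {T : Set (Fin n)} (h : ∀ v ∈ T, 1 ≤ c v) : Solv n c T :=
  ⟨c, Relation.ReflTransGen.refl, h⟩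

lemma solv_mono {c : Fin n → ℕ} {T T' : Set (Fin n)} (hT : T' ⊆ T) (h : Solv n c T) :
    Solv n c T' := by
  obtain ⟨c', h1, h2⟩ := h
  exact ⟨c', h1, fun v hv => h2 v (hT hv)⟩

lemma solv_congr {c d : Fin n → ℕ} {T : Set (Fin n)} (hcd : c = d) (h : Solv n c T) :
    Solv n d T := hcd ▸ h

lemma reach_solv {c c' : Fin n → ℕ} {T : Set (Fin n)}
    (h1 : PebblingReach (pathGraph n) c c') (h2 : Solv n c' T) : Solv n c T := by
  obtain ⟨c'', h3, h4⟩ := h2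
  exact ⟨c'', Relation.ReflTransGen.trans h1 h3, h4⟩

lemma solv_combine {c d : Fin n → ℕ} {T S : Set (Fin n)}
    (hc : Solv n c T) (hd : Solv n d S) : Solv n (fun w => c w + d w) (T ∪ S) := by
  obtain ⟨c', hc1, hc2⟩ := hc
  obtain ⟨d', hd1, hd2⟩ := hd
  refine ⟨fun w => c' w + d' w, ?_, ?_⟩
  · exact Relation.ReflTransGen.trans (reach_add d hc1) (reach_add_left c' hd1)
  · rintro v (hv | hv)
    · have := hc2 v hv; show 1 ≤ c' v + d' v; omega
    · have := hd2 v hv; show 1 ≤ c' v + d' v; omega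

lemma exists_split (c : Fin n → ℕ) (s : ℕ) (hs : s ≤ ∑ v, c v) :
    ∃ e : Fin n → ℕ, (∀ i, e i ≤ c i) ∧ (∑ v, e v) = s := by
  induction s with
  | zero => exact ⟨fun _ => 0, fun i => Nat.zero_le _, by simp⟩
  | succ s ih =>
    obtain ⟨e, hle, hsum⟩ := ih (by omega)
    have hex : ∃ i, e i < c i := by
      by_contra h
      push_neg at h
      have : ∑ v, c v ≤ ∑ v, e v := Finset.sum_le_sum (fun i _ => h i)
      omega
    obtain ⟨i, hi⟩ := hex
    refine ⟨fun w => if w = i then e w + 1 else e w, ?_, ?_⟩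
    · intro j
      by_cases hj : j = i
      · subst hj; simp only [eq_self_iff_true, if_true]; omega
      · simp only [if_neg hj]; exact hle j
    · have : (fun w => if w = i then e w + 1 else e w)
          = fun w => e w + (if w = i then 1 else 0) := by
        funext w; by_cases hw : w = i <;> simp [hw]
      rw [this, Finset.sum_add_distrib, hsum, Finset.sum_ite_eq' Finset.univ i (fun _ => 1)]
      simp

lemma sum_split {c e : Fin n → ℕ} (hle : ∀ i, e i ≤ c i) :
    (∑ v, (fun w => c w - e w) v) + ∑ v, e v = ∑ v, c v := by
  rw [← Finset.sum_add_distrib]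
  exact Finset.sum_congr rfl (fun i _ => by have := hle i; omega)

lemma sum_two_update (c : Fin n → ℕ) (u v : Fin n) (huv : u ≠ v) (p q : ℕ) :
    (∑ w, (if w = u then p else if w = v then q else c w)) + (c u + c v)
      = (∑ w, c w) + (p + q) := by
  have point : ∀ w : Fin n,
      (if w = u then p else if w = v then q else c w)
        + ((if w = u then c w else 0) + (if w = v then c w else 0))
      = c w + ((if w = u then p else 0) + (if w = v then q else 0)) := by
    intro w
    by_cases hw : w = u <;> by_cases hw2 : w = v <;>
      simp [hw, hw2, huv, huv.symm] <;> omega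
  have hsum := Finset.sum_congr rfl (fun w (_ : w ∈ Finset.univ) => point w)
  rw [Finset.sum_add_distrib, Finset.sum_add_distrib, Finset.sum_add_distrib,
    Finset.sum_add_distrib] at hsum
  rw [Finset.sum_ite_eq' Finset.univ u c, Finset.sum_ite_eq' Finset.univ v c,
    Finset.sum_ite_eq' Finset.univ u (fun _ => p),
    Finset.sum_ite_eq' Finset.univ v (fun _ => q)] at hsum
  simp only [Finset.mem_univ, if_pos] at hsum
  omega

end FinPart

lemma two_pow_le_two_pow {m l : ℕ} (h : m ≤ l) : (2:ℕ)^m ≤ 2^l :=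
  Nat.pow_le_pow_right (by norm_num) h

lemma adj_succ {n : ℕ} (i : ℕ) (h : i + 1 < n) :
    (pathGraph n).Adj ⟨i, by omega⟩ ⟨i + 1, h⟩ := by
  rw [pathGraph_adj]; exact Or.inl rfl

lemma adj_pred {n : ℕ} (i : ℕ) (h : i + 1 < n) :
    (pathGraph n).Adj ⟨i + 1, h⟩ ⟨i, by omega⟩ := (adj_succ i h).symm

lemma deliver {n : ℕ} : ∀ (k a m b : ℕ), b - a = k → a < b → b < n →
    ∀ c : Fin n → ℕ, (∀ i : Fin n, c i ≠ 0 → a < i.val ∧ i.val ≤ b) →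
    m * 2 ^ (b - a) ≤ ∑ v, c v →
    ∃ c', PebblingReach (pathGraph n) c c' ∧ ∀ i : Fin n, i.val = a → m ≤ c' i := by
  intro k
  induction k with
  | zero => intro a m b hk hab hbn c hsupp htot; omega
  | succ k ih =>
    intro a m b hk hab hbn c hsupp htot
    rcases Nat.eq_zero_or_pos m with hm | hm
    · subst hm; exact ⟨c, Relation.ReflTransGen.refl, fun _ _ => Nat.zero_le _⟩
    have ha1 : a + 1 < n := by omega
    set u : Fin n := ⟨a + 1, ha1⟩ with hu
    set v : Fin n := ⟨a, by omega⟩ with hv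
    have hadj : (pathGraph n).Adj u v := adj_pred a ha1
    have huv : u ≠ v := by intro h; have := congrArg Fin.val h; simp [hu, hv] at this
    by_cases hq : 2 * m ≤ c u
    · refine ⟨_, reach_halve hadj c, ?_⟩
      intro i hi
      have hiv : i = v := Fin.ext hi
      subst hiv
      simp only [if_neg huv.symm, eq_self_iff_true, if_true]
      omega
    · by_cases hb1 : a + 1 = b
      · exfalso
        have hsum : ∑ w, c w = c u := by
          apply Finset.sum_eq_single_of_mem u (Finset.mem_univ u)
          intro i _ hi
          by_contra hne0
          have h2 := hsupp i hne0
          exact hi (Fin.ext (by simp [hu]; omega))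
        have hba : b - a = 1 := by omega
        rw [hsum, hba, pow_one] at htot
        omega
      · set q := c u with hqdef
        set cA : Fin n → ℕ := fun w => if w = u then q else 0 with hcA
        set cR : Fin n → ℕ := fun w => if w = u then 0 else c w with hcR
        have hcc : (fun w => cR w + cA w) = c := by
          funext w; by_cases hw : w = u <;> simp [hcR, hcA, hw, hqdef]
        have hsumA : ∑ w, cA w = q := by
          rw [hcA, Finset.sum_ite_eq' Finset.univ u (fun _ => q)]; simp
        have hcsum : ∑ w, cR w + q = ∑ w, c w := by
          rw [← hsumA, ← Finset.sum_add_distrib]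
          exact Finset.sum_congr rfl (fun w _ => congrFun hcc w)
        have hsuppR : ∀ i : Fin n, cR i ≠ 0 → a + 1 < i.val ∧ i.val ≤ b := by
          intro i hi
          by_cases hiu : i = u
          · rw [hcR] at hi; simp [hiu] at hi
          · have h2 := hsupp i (by rw [hcR] at hi; simpa [hiu] using hi)
            have h3 : i.val ≠ a + 1 := fun h => hiu (Fin.ext (by simp [hu, h]))
            omega
        have htotR : (2 * m - q) * 2 ^ (b - (a + 1)) ≤ ∑ w, cR w := by
          set P := 2 ^ (b - (a + 1)) with hP
          have hpow : 2 ^ (b - a) = 2 * P := by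
            rw [hP, ← pow_succ']; congr 1; omega
          have hP1 : 1 ≤ P := Nat.one_le_two_pow
          rw [hpow] at htot
          have htot2 : 2 * m * P ≤ ∑ w, c w := by
            calc 2 * m * P = m * (2 * P) := by ring
            _ ≤ ∑ w, c w := htot
          have h2 : (2 * m - q) * P + q * P = 2 * m * P := by
            rw [← Nat.add_mul]; congr 1; omega
          have h3 : q ≤ q * P := Nat.le_mul_of_pos_right q (by omega)
          omega
        obtain ⟨c1, hreach1, hc1⟩ :=
          ih (a + 1) (2 * m - q) b (by omega) (by omega) hbn cR hsuppR htotR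
        have hc1u : 2 * m - q ≤ c1 u := hc1 u rfl
        have hreach2 : PebblingReach (pathGraph n) c (fun w => c1 w + cA w) := by
          have := reach_add cA hreach1
          rwa [hcc] at this
        refine ⟨_, Relation.ReflTransGen.trans hreach2
          (reach_halve hadj (fun w => c1 w + cA w)), ?_⟩
        intro i hi
        have hiv : i = v := Fin.ext hi
        subst hiv
        simp only [if_neg huv.symm, eq_self_iff_true, if_true]
        have hcAu : cA u = q := by simp [hcA]
        omega

lemma pile_cover {n : ℕ} : ∀ (k a b : ℕ), b - a = k → a ≤ b → b < n →
    ∀ c : Fin n → ℕ, (∀ i : Fin n, i.val = a → 2 ^ (k + 1) - 1 ≤ c i) →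
    Solv n c (Ival n a b) := by
  intro k
  induction k with
  | zero =>
    intro a b hk hab hbn c hc
    apply solv_refl
    intro w hw
    obtain ⟨h1, h2⟩ := hw
    have := hc w (by omega)
    omega
  | succ k ih =>
    intro a b hk hab hbn c hc
    have hab' : a < b := by omega
    have ha1 : a + 1 < n := by omega
    set va : Fin n := ⟨a, by omega⟩ with hva
    set va1 : Fin n := ⟨a + 1, ha1⟩ with hva1
    have hne : va ≠ va1 := by intro h; have := congrArg Fin.val h; simp [hva, hva1] at this
    have hcva : 2 ^ (k + 2) - 1 ≤ c va := hc va rfl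
    have hca : 1 ≤ c va := by
      have h2 : (2:ℕ)^1 ≤ 2^(k+2) := two_pow_le_two_pow (by omega)
      omega
    set e : Fin n → ℕ := fun w => if w = va then 1 else 0 with he
    set d : Fin n → ℕ := fun w => if w = va then c w - 1 else c w with hd
    have hced : c = fun w => e w + d w := by
      funext w
      by_cases hw : w = va
      · subst hw; simp [he, hd]; omega
      · simp [he, hd, hw]
    have hadj : (pathGraph n).Adj va va1 := adj_succ a ha1
    set d1 : Fin n → ℕ := fun w =>
      if w = va then d va % 2 else if w = va1 then d va1 + d va / 2 else d w with hd1
    have hreach : PebblingReach (pathGraph n) d d1 := reach_halve hadj d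
    have hd1v : 2 ^ (k + 1) - 1 ≤ d1 va1 := by
      have hdva : d va = c va - 1 := by simp [hd]
      have hpow : 2 ^ (k + 2) = 2 * 2 ^ (k + 1) := by rw [pow_succ']
      have hval : d1 va1 = d va1 + d va / 2 := by
        simp only [hd1, if_neg hne.symm, eq_self_iff_true, if_true]
      rw [hval, hdva]
      omega
    have hsolv1 : Solv n d1 (Ival n (a + 1) b) :=
      ih (a + 1) b (by omega) (by omega) hbn d1
        (by intro i hi; have : i = va1 := Fin.ext hi; rw [this]; exact hd1v)
    have hsolvd : Solv n d (Ival n (a + 1) b) := reach_solv hreach hsolv1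
    have hsolve : Solv n e {va} := solv_refl
      (by intro w hw; rw [Set.mem_singleton_iff] at hw; simp [he, hw])
    have hcomb := solv_combine hsolve hsolvd
    apply solv_mono (T := {va} ∪ Ival n (a + 1) b)
    · intro w hw
      obtain ⟨h1, h2⟩ := hw
      by_cases hwa : w.val = a
      · left; exact Fin.ext hwa
      · right; exact ⟨by omega, h2⟩
    · exact solv_congr hced.symm hcomb
lemma adj_mk {n : ℕ} (i j : ℕ) (hi : i < n) (hj : j < n) (h : i + 1 = j ∨ j + 1 = i) :
    (pathGraph n).Adj ⟨i, hi⟩ ⟨j, hj⟩ := by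
  rcases h with h | h
  · exact pathGraph_adj.mpr (Or.inl h)
  · exact pathGraph_adj.mpr (Or.inr h)

lemma sum_one_update {n : ℕ} (c : Fin n → ℕ) (u : Fin n) (p : ℕ) :
    (∑ w, (if w = u then p else c w)) + c u = (∑ w, c w) + p := by
  have point : ∀ w : Fin n,
      (if w = u then p else c w) + (if w = u then c w else 0)
      = c w + (if w = u then p else 0) := by
    intro w
    by_cases hw : w = u <;> simp [hw] <;> omega
  have hsum := Finset.sum_congr rfl (fun w (_ : w ∈ Finset.univ) => point w)
  rw [Finset.sum_add_distrib, Finset.sum_add_distrib] at hsum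
  rw [Finset.sum_ite_eq' Finset.univ u c,
    Finset.sum_ite_eq' Finset.univ u (fun _ => p)] at hsum
  simp only [Finset.mem_univ, if_pos] at hsum
  omega

lemma solv_two {n : ℕ} {u v : Fin n} (hadj : (pathGraph n).Adj u v) (c : Fin n → ℕ)
    (h2 : 2 ≤ c u) : Solv n c {v} := by
  refine ⟨_, reach_halve hadj c, ?_⟩
  intro w hw
  rw [Set.mem_singleton_iff] at hw
  subst hw
  simp only [if_neg hadj.ne.symm, eq_self_iff_true, if_true]
  omega

lemma solv_singleton_refl {n : ℕ} {c : Fin n → ℕ} {a b : ℕ} (hab : a = b)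
    (h : ∀ i : Fin n, i.val = a → 1 ≤ c i) : Solv n c (Ival n a b) :=
  solv_refl (fun w hw => h w (by obtain ⟨h1, h2⟩ := hw; omega))

lemma master {n : ℕ} : ∀ (k : ℕ),
    (∀ a b, b - a = k → a ≤ b → b + 1 < n →
      ∀ c : Fin n → ℕ, (∀ i : Fin n, c i ≠ 0 → a + 1 ≤ i.val ∧ i.val ≤ b + 1) →
      2 ^ (k + 2) - 2 ≤ ∑ v, c v → Solv n c (Ival n a b)) ∧
    (∀ a b, b - a = k → 1 ≤ a → a ≤ b → b + 1 < n →
      ∀ c : Fin n → ℕ, (∀ i : Fin n, c i ≠ 0 → a - 1 ≤ i.val ∧ i.val ≤ b + 1) →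
      2 ^ (k + 2) - 1 ≤ ∑ v, c v → Solv n c (Ival n a b)) ∧
    (∀ a b, b - a = k → a ≤ b → b + 1 < n →
      ∀ c : Fin n → ℕ, (∀ i : Fin n, c i ≠ 0 → a ≤ i.val ∧ i.val ≤ b + 1) →
      2 ^ (k + 2) - 2 ≤ ∑ v, c v → Solv n c (Ival n a b)) := by
  intro k
  induction k using Nat.strong_induction_on with
  | _ k ih =>
  have hpow : (2:ℕ) ^ (k + 2) = 2 * 2 ^ (k + 1) := by rw [pow_succ']
  have hpow1 : (2:ℕ) ^ (k + 1) = 2 * 2 ^ k := by rw [pow_succ']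
  have hge1 : (1:ℕ) ≤ 2 ^ k := Nat.one_le_two_pow
  -- ===================== W =====================
  have hW : ∀ a b, b - a = k → a ≤ b → b + 1 < n →
      ∀ c : Fin n → ℕ, (∀ i : Fin n, c i ≠ 0 → a + 1 ≤ i.val ∧ i.val ≤ b + 1) →
      2 ^ (k + 2) - 2 ≤ ∑ v, c v → Solv n c (Ival n a b) := by
    intro a b hk hab hbn c hsupp htot
    have hs : 2 ^ (k + 1) ≤ ∑ v, c v := by omega
    obtain ⟨e, hle, hesum⟩ := exists_split c (2 ^ (k + 1)) hs
    set d : Fin n → ℕ := fun w => c w - e w with hd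
    have hdsum : (∑ v, d v) + ∑ v, e v = ∑ v, c v := sum_split hle
    have hced : c = fun w => e w + d w := by
      funext w; have := hle w; simp only [hd]; omega
    -- deliver one pebble to a with e
    have hsolve : Solv n e (Ival n a a) := by
      have hsuppe : ∀ i : Fin n, e i ≠ 0 → a < i.val ∧ i.val ≤ b + 1 := by
        intro i hi
        have h2 := hsupp i (fun h => hi (by have := hle i; omega))
        omega
      have htote : 1 * 2 ^ ((b + 1) - a) ≤ ∑ v, e v := by
        have h7 : (b + 1) - a = k + 1 := by omega
        rw [h7, one_mul, hesum]
      obtain ⟨e', hre, he'⟩ := deliver ((b + 1) - a) a 1 (b + 1) rfl (by omega) hbn e hsuppe htote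
      exact ⟨e', hre, fun w hw => he' w (by obtain ⟨h1, h2⟩ := hw; omega)⟩
    rcases Nat.eq_zero_or_pos k with hk0 | hk1
    · -- a = b
      have hab2 : a = b := by omega
      subst hab2
      have hcomb := solv_combine hsolve (solv_refl (c := d) (T := ∅)
        (fun v hv => absurd hv (Set.notMem_empty v)))
      refine solv_mono ?_ (solv_congr hced.symm hcomb)
      intro w hw; exact Or.inl hw
    · -- a < b, use S at k-1 on d
      have hS' := (ih (k - 1) (by omega)).2.2 (a + 1) b (by omega) (by omega) hbn d
      have hsuppd : ∀ i : Fin n, d i ≠ 0 → a + 1 ≤ i.val ∧ i.val ≤ b + 1 := by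
        intro i hi
        exact hsupp i (fun h => hi (by have := hle i; simp only [hd]; omega))
      have htotd : 2 ^ ((k - 1) + 2) - 2 ≤ ∑ v, d v := by
        have h8 : (k - 1) + 2 = k + 1 := by omega
        rw [h8]; omega
      have hsolvd := hS' hsuppd htotd
      have hcomb := solv_combine hsolve hsolvd
      refine solv_mono ?_ (solv_congr hced.symm hcomb)
      rintro w ⟨h1, h2⟩
      by_cases hwa : w.val = a
      · exact Or.inl ⟨by omega, by omega⟩
      · exact Or.inr ⟨by omega, h2⟩
  -- ===================== Q =====================
  have hQ : ∀ a b, b - a = k → 1 ≤ a → a ≤ b → b + 1 < n →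
      ∀ c : Fin n → ℕ, (∀ i : Fin n, c i ≠ 0 → a - 1 ≤ i.val ∧ i.val ≤ b + 1) →
      2 ^ (k + 2) - 1 ≤ ∑ v, c v → Solv n c (Ival n a b) := by
    intro a b hk ha hab hbn c hsupp htot
    have han : a < n := by omega
    have ham : a - 1 < n := by omega
    set vm1 : Fin n := ⟨a - 1, ham⟩ with hvm1
    set va : Fin n := ⟨a, han⟩ with hva
    have hvmval : vm1.val = a - 1 := rfl
    have hvaval : va.val = a := rfl
    have hnevm : vm1 ≠ va := by
      intro h; have := congrArg Fin.val h; simp [hvm1, hva] at this; omega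
    have hadjm : (pathGraph n).Adj vm1 va := adj_mk _ _ ham han (Or.inl (by omega))
    by_cases hx : 2 ^ (k + 2) - 2 ≤ c vm1
    · -- big pile at a-1
      have hreach := reach_halve hadjm c
      apply reach_solv hreach
      apply pile_cover k a b hk hab (by omega)
      intro i hi
      have hiva : i = va := Fin.ext hi
      subst hiva
      simp only [if_neg hnevm.symm, eq_self_iff_true, if_true]
      omega
    · by_cases hres : 1 ≤ c va + c vm1 / 2
      · -- move pairs from a-1 to a, reserve 1 at a, recurse
        rcases Nat.eq_zero_or_pos k with hk0 | hk1
        · -- base: k = 0, a = b; cover a directly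
          have hab2 : a = b := by omega
          by_cases h1 : 1 ≤ c va
          · exact solv_singleton_refl hab2 (fun i hi => by
              have : i = va := Fin.ext hi; rw [this]; exact h1)
          · -- c va = 0 so c vm1 ≥ 2
            have hcva : c va = 0 := by omega
            have hcm : 2 ≤ c vm1 := by omega
            refine solv_mono ?_ (solv_two hadjm c hcm)
            rintro w ⟨h1', h2'⟩
            rw [Set.mem_singleton_iff]
            exact Fin.ext (by omega)
        · -- k ≥ 1
          have hreach := reach_halve hadjm c
          set c1 : Fin n → ℕ := fun w =>
            if w = vm1 then c vm1 % 2 else if w = va then c va + c vm1 / 2 else c w with hc1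
          have hc1sum : (∑ w, c1 w) + (c vm1 + c va) = (∑ w, c w) + (c vm1 % 2 + (c va + c vm1 / 2)) :=
            sum_two_update c vm1 va hnevm _ _
          set d : Fin n → ℕ := fun w =>
            if w = vm1 then 0 else if w = va then c va + c vm1 / 2 - 1 else c w with hdd
          have hdsum : (∑ w, d w) + (c vm1 + c va) = (∑ w, c w) + (0 + (c va + c vm1 / 2 - 1)) :=
            sum_two_update c vm1 va hnevm _ _
          set e : Fin n → ℕ := fun w =>
            if w = vm1 then c vm1 % 2 else if w = va then 1 else 0 with hee
          have hc1ed : c1 = fun w => e w + d w := by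
            funext w
            simp only [hc1, hdd, hee]
            by_cases hw : w = vm1
            · rw [if_pos hw, if_pos hw, if_pos hw]; omega
            · rw [if_neg hw, if_neg hw, if_neg hw]
              by_cases hw2 : w = va
              · rw [if_pos hw2, if_pos hw2, if_pos hw2]; omega
              · rw [if_neg hw2, if_neg hw2, if_neg hw2]; omega
          have hsolve : Solv n e (Ival n a a) := by
            apply solv_refl
            rintro w ⟨h1', h2'⟩
            have : w = va := Fin.ext (by omega)
            rw [this]
            simp only [hee, if_neg hnevm.symm, eq_self_iff_true, if_true]
            omega
          have hsolvd : Solv n d (Ival n (a + 1) b) := by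
            apply (ih (k - 1) (by omega)).2.1 (a + 1) b (by omega) (by omega) (by omega) hbn d
            · intro i hi
              simp only [hdd] at hi
              by_cases hiv : i = vm1
              · rw [hiv] at hi; simp at hi
              · by_cases hiv2 : i = va
                · subst hiv2; omega
                · simp only [if_neg hiv, if_neg hiv2] at hi
                  have h2 := hsupp i hi
                  have h3 : i.val ≠ a - 1 := fun h => hiv (Fin.ext h)
                  omega
            · have h8 : (k - 1) + 2 = k + 1 := by omega
              rw [h8]
              omega
          have hcomb := solv_combine hsolve hsolvd
          have hsolvc1 := solv_congr hc1ed.symm hcomb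
          apply reach_solv hreach
          refine solv_mono ?_ hsolvc1
          rintro w ⟨h1', h2'⟩
          by_cases hwa : w.val = a
          · exact Or.inl ⟨by omega, by omega⟩
          · exact Or.inr ⟨by omega, h2'⟩
      · -- c va = 0, c vm1 ≤ 1 : throw away the stray pebble, use W
        have hcva : c va = 0 := by omega
        have hcm1 : c vm1 ≤ 1 := by omega
        set e : Fin n → ℕ := fun w => if w = vm1 then c w else 0 with hee
        set d : Fin n → ℕ := fun w => if w = vm1 then 0 else c w with hdd
        have hced : c = fun w => e w + d w := by
          funext w; by_cases hw : w = vm1 <;> simp [hee, hdd, hw]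
        have hdsum : (∑ w, d w) + c vm1 = (∑ w, c w) + 0 := sum_one_update c vm1 0
        have hsolvd : Solv n d (Ival n a b) := by
          apply hW a b hk hab hbn d
          · intro i hi
            simp only [hdd] at hi
            by_cases hiv : i = vm1
            · rw [hiv] at hi; simp at hi
            · simp only [if_neg hiv] at hi
              have h2 := hsupp i hi
              have h3 : i.val ≠ a - 1 := fun h => hiv (Fin.ext h)
              have h4 : i.val ≠ a := by
                intro h
                have hiva : i = va := Fin.ext h
                rw [hiva] at hi
                exact hi hcva
              omega
          · omega
        have hsolve : Solv n e (∅ : Set (Fin n)) :=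
          solv_refl (fun v hv => absurd hv (Set.notMem_empty v))
        have hcomb := solv_combine hsolve hsolvd
        refine solv_mono ?_ (solv_congr hced.symm hcomb)
        intro w hw; exact Or.inr hw
  -- ===================== S =====================
  have hS : ∀ a b, b - a = k → a ≤ b → b + 1 < n →
      ∀ c : Fin n → ℕ, (∀ i : Fin n, c i ≠ 0 → a ≤ i.val ∧ i.val ≤ b + 1) →
      2 ^ (k + 2) - 2 ≤ ∑ v, c v → Solv n c (Ival n a b) := by
    intro a b hk hab hbn c hsupp htot
    have han : a < n := by omega
    set va : Fin n := ⟨a, han⟩ with hva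
    have hvaval : va.val = a := rfl
    by_cases h1 : 1 ≤ c va
    · rcases Nat.eq_zero_or_pos k with hk0 | hk1
      · exact solv_singleton_refl (by omega) (fun i hi => by
          have : i = va := Fin.ext hi; rw [this]; exact h1)
      · set e : Fin n → ℕ := fun w => if w = va then 1 else 0 with hee
        set d : Fin n → ℕ := fun w => if w = va then c w - 1 else c w with hdd
        have hced : c = fun w => e w + d w := by
          funext w
          by_cases hw : w = va
          · subst hw; simp only [hee, hdd, eq_self_iff_true, if_true]; omega
          · simp [hee, hdd, hw]
        have hdsum : (∑ w, d w) + c va = (∑ w, c w) + (c va - 1) := by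
          have := sum_one_update c va (c va - 1)
          calc (∑ w, d w) + c va
              = (∑ w, (if w = va then c va - 1 else c w)) + c va := by
                congr 1
                apply Finset.sum_congr rfl
                intro w _
                by_cases hw : w = va <;> simp [hdd, hw]
            _ = (∑ w, c w) + (c va - 1) := this
        have hsolve : Solv n e (Ival n a a) := by
          apply solv_refl
          rintro w ⟨h1', h2'⟩
          have : w = va := Fin.ext (by omega)
          rw [this]
          simp [hee]
        have hsolvd : Solv n d (Ival n (a + 1) b) := by
          apply (ih (k - 1) (by omega)).2.1 (a + 1) b (by omega) (by omega) (by omega) hbn d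
          · intro i hi
            simp only [hdd] at hi
            have hci : c i ≠ 0 := by
              by_cases hw : i = va
              · rw [hw] at hi ⊢; simp only [eq_self_iff_true, if_true] at hi; omega
              · simpa only [if_neg hw] using hi
            have h2 := hsupp i hci
            omega
          · have h8 : (k - 1) + 2 = k + 1 := by omega
            rw [h8]
            omega
        have hcomb := solv_combine hsolve hsolvd
        refine solv_mono ?_ (solv_congr hced.symm hcomb)
        rintro w ⟨h1', h2'⟩
        by_cases hwa : w.val = a
        · exact Or.inl ⟨by omega, by omega⟩
        · exact Or.inr ⟨by omega, h2'⟩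
    ·
      apply hW a b hk hab hbn c _ htot
      intro i hi
      have h2 := hsupp i hi
      have h3 : i.val ≠ a := by
        intro h
        have : i = va := Fin.ext h
        rw [this] at hi
        omega
      omega
  exact ⟨hW, hQ, hS⟩
def walkUp (n : ℕ) : (d i : ℕ) → (hj : i + d < n) → (pathGraph n).Walk ⟨i, by omega⟩ ⟨i + d, hj⟩
  | 0, i, hj => SimpleGraph.Walk.nil
  | (d+1), i, hj =>
    SimpleGraph.Walk.cons (adj_mk i (i+1) (by omega) (by omega) (Or.inl rfl))
      ((walkUp n d (i+1) (by omega)).copy rfl (Fin.ext (show i + 1 + d = i + (d+1) by omega)))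

lemma walkUp_support (n : ℕ) : ∀ (d i : ℕ) (hj : i + d < n),
    ∀ v ∈ (walkUp n d i hj).support, i ≤ v.val ∧ v.val ≤ i + d := by
  intro d
  induction d with
  | zero =>
    intro i hj v hv
    simp only [walkUp, SimpleGraph.Walk.support_nil, List.mem_singleton] at hv
    subst hv
    simp
  | succ d ih =>
    intro i hj v hv
    simp only [walkUp, SimpleGraph.Walk.support_cons, SimpleGraph.Walk.support_copy,
      List.mem_cons] at hv
    rcases hv with hv | hv
    · subst hv; simp
    · have := ih (i+1) (by omega) v hv
      omega

lemma walkUp_isPath (n : ℕ) : ∀ (d i : ℕ) (hj : i + d < n), (walkUp n d i hj).IsPath := by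
  intro d
  induction d with
  | zero => intro i hj; exact SimpleGraph.Walk.IsPath.nil
  | succ d ih =>
    intro i hj
    apply SimpleGraph.Walk.IsPath.cons
    · rw [SimpleGraph.Walk.isPath_copy]
      exact ih (i+1) (by omega)
    · intro hmem
      rw [SimpleGraph.Walk.support_copy] at hmem
      have h2 := walkUp_support n d (i+1) (by omega) _ hmem
      have h3 : ((⟨i, by omega⟩ : Fin n)).val = i := rfl
      omega

lemma tail_getLast_eq {α : Type*} {x y : α} {l : List α} (hl : l = x :: l.tail)
    (htne : l.tail ≠ []) (hy : l.getLast? = some y) : l.tail.getLast htne = y := by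
  obtain ⟨t0, ts, hts⟩ := List.exists_cons_of_ne_nil htne
  have h1 : l.tail.getLast? = some (l.tail.getLast htne) := List.getLast?_eq_getLast htne
  have h2 : l.getLast? = l.tail.getLast? := by
    conv_lhs => rw [hl, hts]
    rw [hts]
    exact List.getLast?_cons_cons
  rw [h2, h1] at hy
  exact Option.some_injective _ hy

lemma support_getLast? {V : Type*} {G : SimpleGraph V} {x y : V} (p : G.Walk x y) :
    p.support.getLast? = some y := by
  rw [List.getLast?_eq_getLast (l := p.support) (by simp)]
  exact congrArg some p.getLast_support

lemma internal_mem {V : Type*} {G : SimpleGraph V} {x y : V} {p : G.Walk x y}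
    (hp : p.IsPath) {v : V} (hv : v ∈ p.support.tail.dropLast) :
    v ∈ p.support ∧ v ≠ x ∧ v ≠ y := by
  have hsup := p.support_eq_cons
  have hnd : p.support.Nodup := hp.support_nodup
  have hvt : v ∈ p.support.tail := List.dropLast_subset _ hv
  have hvsup : v ∈ p.support := by rw [hsup]; exact List.mem_cons_of_mem _ hvt
  have htne : p.support.tail ≠ [] := List.ne_nil_of_mem hvt
  have hndc : (x :: p.support.tail).Nodup := by rw [← hsup]; exact hnd
  obtain ⟨hxnt, hndt⟩ := List.nodup_cons.mp hndc
  refine ⟨hvsup, fun h => hxnt (h ▸ hvt), ?_⟩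
  have hlast : p.support.tail.getLast htne = y :=
    tail_getLast_eq hsup htne (support_getLast? p)
  intro hvy
  have hdecomp := List.dropLast_append_getLast htne
  rw [← hdecomp] at hndt
  have hdisj := List.disjoint_of_nodup_append hndt
  exact hdisj hv (by rw [List.mem_singleton, hlast, hvy])

lemma mem_tail_dropLast {V : Type*} {G : SimpleGraph V} {x y v : V} (p : G.Walk x y)
    (hv : v ∈ p.support) (hx : v ≠ x) (hy : v ≠ y) : v ∈ p.support.tail.dropLast := by
  have hsup := p.support_eq_cons
  have hvt : v ∈ p.support.tail := by
    rw [hsup] at hv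
    rcases List.mem_cons.mp hv with h | h
    · exact absurd h hx
    · exact h
  have htne : p.support.tail ≠ [] := List.ne_nil_of_mem hvt
  have hlast : p.support.tail.getLast htne = y :=
    tail_getLast_eq hsup htne (support_getLast? p)
  have hdecomp := List.dropLast_append_getLast htne
  rw [← hdecomp] at hvt
  rcases List.mem_append.mp hvt with h | h
  · exact h
  · exfalso
    rw [List.mem_singleton, hlast] at h
    exact hy h

lemma exists_good_path {n : ℕ} (hn : 3 ≤ n) (x y : Fin n) :
    ∃ p : (pathGraph n).Walk x y, p.IsPath ∧
      ∀ v ∈ p.support.tail.dropLast, 1 ≤ v.val ∧ v.val ≤ n - 2 := by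
  rcases le_or_gt x.val y.val with hxy | hxy
  · have hbound : x.val + (y.val - x.val) < n := by have := y.isLt; omega
    have hu : (⟨x.val, by omega⟩ : Fin n) = x := Fin.ext rfl
    have hv : (⟨x.val + (y.val - x.val), hbound⟩ : Fin n) = y :=
      Fin.ext (show x.val + (y.val - x.val) = y.val by omega)
    have hpth : ((walkUp n (y.val - x.val) x.val hbound).copy hu hv).IsPath := by
      rw [SimpleGraph.Walk.isPath_copy]; exact walkUp_isPath n _ _ hbound
    refine ⟨(walkUp n (y.val - x.val) x.val hbound).copy hu hv, hpth, ?_⟩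
    intro v hvmem
    obtain ⟨hvs, hvx, hvy⟩ := internal_mem hpth hvmem
    rw [SimpleGraph.Walk.support_copy] at hvs
    have hb := walkUp_support n _ _ hbound v hvs
    have h1 : v.val ≠ x.val := fun h => hvx (Fin.ext h)
    have h2 : v.val ≠ y.val := fun h => hvy (Fin.ext h)
    have hy' := y.isLt
    omega
  · have hbound : y.val + (x.val - y.val) < n := by have := x.isLt; omega
    have hu : (⟨y.val, by omega⟩ : Fin n) = y := Fin.ext rfl
    have hv : (⟨y.val + (x.val - y.val), hbound⟩ : Fin n) = x :=
      Fin.ext (show y.val + (x.val - y.val) = x.val by omega)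
    have hpth : (((walkUp n (x.val - y.val) y.val hbound).copy hu hv).reverse).IsPath := by
      apply SimpleGraph.Walk.IsPath.reverse
      rw [SimpleGraph.Walk.isPath_copy]; exact walkUp_isPath n _ _ hbound
    refine ⟨((walkUp n (x.val - y.val) y.val hbound).copy hu hv).reverse, hpth, ?_⟩
    intro v hvmem
    obtain ⟨hvs, hvx, hvy⟩ := internal_mem hpth hvmem
    rw [SimpleGraph.Walk.support_reverse, List.mem_reverse,
      SimpleGraph.Walk.support_copy] at hvs
    have hb := walkUp_support n _ _ hbound v hvs
    have h1 : v.val ≠ x.val := fun h => hvx (Fin.ext h)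
    have h2 : v.val ≠ y.val := fun h => hvy (Fin.ext h)
    have hx' := x.isLt
    omega

lemma walk_hits {n : ℕ} {x y : Fin n} (p : (pathGraph n).Walk x y) :
    ∀ k : ℕ, (x.val ≤ k ∧ k ≤ y.val) ∨ (y.val ≤ k ∧ k ≤ x.val) →
    ∃ v ∈ p.support, v.val = k := by
  induction p with
  | nil =>
    intro k hk
    exact ⟨_, SimpleGraph.Walk.start_mem_support _, by omega⟩
  | @cons u v' y h q ih =>
    intro k hk
    by_cases hc : (v'.val ≤ k ∧ k ≤ y.val) ∨ (y.val ≤ k ∧ k ≤ v'.val)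
    · obtain ⟨w, hw1, hw2⟩ := ih k hc
      exact ⟨w, by rw [SimpleGraph.Walk.support_cons]; exact List.mem_cons_of_mem _ hw1, hw2⟩
    · have hadj := pathGraph_adj.mp h
      exact ⟨u, SimpleGraph.Walk.start_mem_support _, by omega⟩

lemma hub_contains {n : ℕ} (hn : 3 ≤ n) {U : Set (Fin n)}
    (hU : IsStrongHubSet (pathGraph n) U) :
    ∀ j : ℕ, 1 ≤ j → j ≤ n - 2 → ∀ (h : j < n), (⟨j, h⟩ : Fin n) ∈ U := by
  obtain ⟨-, hpath⟩ := hU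
  obtain ⟨p, hp, hint⟩ := hpath ⟨0, by omega⟩ ⟨n - 1, by omega⟩
  intro j hj1 hj2 hjn
  obtain ⟨v, hvmem, hvval⟩ := walk_hits p j (Or.inl ⟨(show (0:ℕ) ≤ j by omega), (show j ≤ n - 1 by omega)⟩)
  have hvx : v ≠ ⟨0, by omega⟩ := by
    intro h
    rw [h] at hvval
    have h0 : (0:ℕ) = j := hvval
    omega
  have hvy : v ≠ ⟨n - 1, by omega⟩ := by
    intro h
    rw [h] at hvval
    have h0 : n - 1 = j := hvval
    omega
  have hvd := mem_tail_dropLast p hvmem hvx hvy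
  have hh := hint v hvd
  have hveq : (⟨j, hjn⟩ : Fin n) = v := Fin.ext (show j = v.val by omega)
  rw [hveq]
  exact hh
def wt (n : ℕ) (i : Fin n) (x : ℕ) : ℕ :=
  if i.val = 0 then (x - 1) * 2 ^ (n - 2) else x * 2 ^ (n - 1 - i.val)

def Phi (n : ℕ) (c : Fin n → ℕ) : ℕ := ∑ i, wt n i (c i)

lemma phi_move {n : ℕ} (hn : 3 ≤ n) {c c' : Fin n → ℕ}
    (h : PebblingMove (pathGraph n) c c') : Phi n c' ≤ Phi n c := by
  obtain ⟨u, v, hadj, hcu, hce⟩ := h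
  have huv : u ≠ v := hadj.ne
  have hadj' := pathGraph_adj.mp hadj
  have hc'u : c' u = c u - 2 := by
    simp only [hce, eq_self_iff_true, if_true]
  have hc'v : c' v = c v + 1 := by
    simp only [hce, if_neg huv.symm, eq_self_iff_true, if_true]
  have hc'w : ∀ i, i ≠ u → i ≠ v → c' i = c i := by
    intro i hi1 hi2; simp only [hce, if_neg hi1, if_neg hi2]
  have hun := u.isLt
  have hvn := v.isLt
  -- key pointwise inequality
  have key : wt n u (c u - 2) + wt n v (c v + 1) ≤ wt n u (c u) + wt n v (c v) := by
    unfold wt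
    by_cases hu0 : u.val = 0
    · have hv1 : v.val = 1 := by omega
      rw [if_pos hu0, if_pos hu0, if_neg (by omega), if_neg (by omega)]
      have hexp : n - 1 - v.val = n - 2 := by omega
      rw [hexp]
      rw [← Nat.add_mul, ← Nat.add_mul]
      exact Nat.mul_le_mul_right _ (by omega)
    · by_cases hv0 : v.val = 0
      · have hu1 : u.val = 1 := by omega
        rw [if_neg hu0, if_neg hu0, if_pos hv0, if_pos hv0]
        have hexp : n - 1 - u.val = n - 2 := by omega
        rw [hexp]
        rw [← Nat.add_mul, ← Nat.add_mul]
        exact Nat.mul_le_mul_right _ (by omega)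
      · rw [if_neg hu0, if_neg hu0, if_neg hv0, if_neg hv0]
        have hBA : n - 1 - v.val ≤ (n - 1 - u.val) + 1 := by omega
        have h2B : 2 ^ (n - 1 - v.val) ≤ 2 * 2 ^ (n - 1 - u.val) := by
          calc 2 ^ (n - 1 - v.val) ≤ 2 ^ ((n - 1 - u.val) + 1) := two_pow_le_two_pow hBA
            _ = 2 * 2 ^ (n - 1 - u.val) := by rw [pow_succ']
        have h3 : (c v + 1) * 2 ^ (n - 1 - v.val)
            = c v * 2 ^ (n - 1 - v.val) + 2 ^ (n - 1 - v.val) := by ring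
        have h4 : c u * 2 ^ (n - 1 - u.val)
            = (c u - 2) * 2 ^ (n - 1 - u.val) + 2 * 2 ^ (n - 1 - u.val) := by
          rw [← Nat.add_mul]
          congr 1
          omega
        omega
  -- assemble sums
  unfold Phi
  have hvm : v ∈ Finset.univ.erase u := Finset.mem_erase.mpr ⟨huv.symm, Finset.mem_univ v⟩
  rw [← Finset.add_sum_erase _ _ (Finset.mem_univ u), ← Finset.add_sum_erase _ _ hvm,
    ← Finset.add_sum_erase _ (fun i => wt n i (c i)) (Finset.mem_univ u),
    ← Finset.add_sum_erase _ (fun i => wt n i (c i)) hvm]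
  have hrest : ∑ i ∈ (Finset.univ.erase u).erase v, wt n i (c' i)
      = ∑ i ∈ (Finset.univ.erase u).erase v, wt n i (c i) := by
    apply Finset.sum_congr rfl
    intro i hi
    obtain ⟨hiv, hiu'⟩ := Finset.mem_erase.mp hi
    obtain ⟨hiu, -⟩ := Finset.mem_erase.mp hiu'
    rw [hc'w i hiu hiv]
  rw [hrest, hc'u, hc'v]
  omega

lemma phi_reach {n : ℕ} (hn : 3 ≤ n) {c c' : Fin n → ℕ}
    (h : PebblingReach (pathGraph n) c c') : Phi n c' ≤ Phi n c := by
  have h' : Relation.ReflTransGen (PebblingMove (pathGraph n)) c c' := h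
  clear h
  induction h' with
  | refl => exact le_rfl
  | tail _ hstep ih => exact le_trans (phi_move hn hstep) ih

lemma sum_pow_gen : ∀ (m K : ℕ), m ≤ K →
    ∑ j ∈ Finset.Icc 1 m, 2 ^ (K - j) = 2 ^ K - 2 ^ (K - m) := by
  intro m
  induction m with
  | zero => intro K hK; simp
  | succ m ih =>
    intro K hK
    rw [Finset.sum_Icc_succ_top (by omega)]
    rw [ih K (by omega)]
    have hp : (2:ℕ) ^ (K - m) = 2 * 2 ^ (K - (m + 1)) := by
      rw [← pow_succ']
      congr 1
      omega
    have h2 : (2:ℕ) ^ (K - m) ≤ 2 ^ K := two_pow_le_two_pow (by omega)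
    omega

lemma phi_final {n : ℕ} (hn : 3 ≤ n) {c' : Fin n → ℕ}
    (hcov : ∀ j : ℕ, 1 ≤ j → j ≤ n - 2 → ∀ h : j < n, 1 ≤ c' ⟨j, h⟩) :
    2 ^ (n - 1) - 2 ≤ Phi n c' := by
  have hpt : ∀ i : Fin n,
      (if 1 ≤ i.val ∧ i.val ≤ n - 2 then 2 ^ (n - 1 - i.val) else 0) ≤ wt n i (c' i) := by
    intro i
    by_cases hi : 1 ≤ i.val ∧ i.val ≤ n - 2
    · rw [if_pos hi]
      unfold wt
      rw [if_neg (by omega)]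
      have h1 := hcov i.val hi.1 hi.2 i.isLt
      have h2 : (⟨i.val, i.isLt⟩ : Fin n) = i := Fin.ext rfl
      rw [h2] at h1
      calc 2 ^ (n - 1 - i.val) = 1 * 2 ^ (n - 1 - i.val) := (one_mul _).symm
        _ ≤ c' i * 2 ^ (n - 1 - i.val) := Nat.mul_le_mul_right _ h1
    · rw [if_neg hi]; exact Nat.zero_le _
  have h0 : (∑ i : Fin n, if 1 ≤ i.val ∧ i.val ≤ n - 2 then 2 ^ (n - 1 - i.val) else 0)
      ≤ Phi n c' := Finset.sum_le_sum (fun i _ => hpt i)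
  have h1 : (∑ i : Fin n, if 1 ≤ i.val ∧ i.val ≤ n - 2 then 2 ^ (n - 1 - i.val) else 0)
      = ∑ j ∈ Finset.range n, (if 1 ≤ j ∧ j ≤ n - 2 then 2 ^ (n - 1 - j) else 0) :=
    Fin.sum_univ_eq_sum_range (fun j => if 1 ≤ j ∧ j ≤ n - 2 then 2 ^ (n - 1 - j) else 0) n
  have h2 : (∑ j ∈ Finset.range n, if 1 ≤ j ∧ j ≤ n - 2 then 2 ^ (n - 1 - j) else 0)
      = ∑ j ∈ Finset.Icc 1 (n - 2), 2 ^ (n - 1 - j) := by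
    rw [← Finset.sum_filter]
    apply Finset.sum_congr _ (fun _ _ => rfl)
    ext j
    simp only [Finset.mem_filter, Finset.mem_range, Finset.mem_Icc]
    omega
  have h3 := sum_pow_gen (n - 2) (n - 1) (by omega)
  have h4 : n - 1 - (n - 2) = 1 := by omega
  rw [h4] at h3
  have h5 : (2:ℕ) ^ 1 = 2 := by norm_num
  rw [h5] at h3
  omega

lemma sum_init {n : ℕ} (hn : 3 ≤ n) (t : ℕ) :
    (∑ i : Fin n, if i.val = 0 then min t 1 else if i.val = n - 1 then t - 1 else 0) = t := by
  have hpt : ∀ i : Fin n,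
      (if i.val = 0 then min t 1 else if i.val = n - 1 then t - 1 else 0)
      = (if i = (⟨0, by omega⟩ : Fin n) then min t 1 else 0)
        + (if i = (⟨n - 1, by omega⟩ : Fin n) then t - 1 else 0) := by
    intro i
    by_cases h0 : i.val = 0
    · have hne2 : ¬ i = (⟨n - 1, by omega⟩ : Fin n) := by
        intro h
        have h5 : i.val = n - 1 := by rw [h]
        omega
      rw [if_pos h0, if_pos (Fin.ext h0 : i = ⟨0, by omega⟩), if_neg hne2]
      omega
    · have hne0 : ¬ i = (⟨0, by omega⟩ : Fin n) := by
        intro h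
        have h5 : i.val = 0 := by rw [h]
        omega
      rw [if_neg h0, if_neg hne0]
      by_cases h1 : i.val = n - 1
      · rw [if_pos h1, if_pos (Fin.ext h1 : i = ⟨n - 1, by omega⟩)]
        omega
      · have hne2 : ¬ i = (⟨n - 1, by omega⟩ : Fin n) := by
          intro h
          have h5 : i.val = n - 1 := by rw [h]
          omega
        rw [if_neg h1, if_neg hne2]
  rw [Finset.sum_congr rfl (fun i _ => hpt i), Finset.sum_add_distrib,
    Finset.sum_ite_eq' Finset.univ _ (fun _ => min t 1),
    Finset.sum_ite_eq' Finset.univ _ (fun _ => t - 1)]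
  simp only [Finset.mem_univ, if_pos]
  omega

lemma phi_init {n : ℕ} (hn : 3 ≤ n) (t : ℕ) :
    Phi n (fun i => if i.val = 0 then min t 1 else if i.val = n - 1 then t - 1 else 0)
      = t - 1 := by
  unfold Phi
  have hpt : ∀ i : Fin n,
      wt n i (if i.val = 0 then min t 1 else if i.val = n - 1 then t - 1 else 0)
      = (if i = (⟨n - 1, by omega⟩ : Fin n) then t - 1 else 0) := by
    intro i
    unfold wt
    by_cases h0 : i.val = 0
    · have hne2 : ¬ i = (⟨n - 1, by omega⟩ : Fin n) := by
        intro h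
        have h5 : i.val = n - 1 := by rw [h]
        omega
      rw [if_pos h0, if_pos h0, if_neg hne2]
      have hm : min t 1 - 1 = 0 := by omega
      rw [hm, Nat.zero_mul]
    · rw [if_neg h0, if_neg h0]
      by_cases h1 : i.val = n - 1
      · rw [if_pos h1, if_pos (Fin.ext h1 : i = ⟨n - 1, by omega⟩)]
        have hexp : n - 1 - i.val = 0 := by omega
        rw [hexp, pow_zero, Nat.mul_one]
      · have hne2 : ¬ i = (⟨n - 1, by omega⟩ : Fin n) := by
          intro h
          have h5 : i.val = n - 1 := by rw [h]
          omega
        rw [if_neg h1, if_neg hne2, Nat.zero_mul]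
  rw [Finset.sum_congr rfl (fun i _ => hpt i),
    Finset.sum_ite_eq' Finset.univ _ (fun _ => t - 1)]
  simp only [Finset.mem_univ, if_pos]
lemma upper {n : ℕ} (hn : 3 ≤ n) (c : Fin n → ℕ) (htot : 2 ^ (n - 1) - 1 ≤ ∑ v, c v) :
    Solv n c (Ival n 1 (n - 2)) := by
  have h := (master (n := n) (n - 3)).2.1 1 (n - 2) (by omega) (by omega) (by omega) (by omega) c
    (fun i _ => ⟨by omega, by have := i.isLt; omega⟩) ?_
  · exact h
  · have h9 : n - 3 + 2 = n - 1 := by omega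
    rw [h9]
    exact htot

end SHAux

/-- For `n ≥ 3`, the strong hub cover pebbling number of `P_n` is `2^(n-1) - 1`. -/
theorem stmt8 (n : ℕ) (hn : 3 ≤ n) :
    IsLeast {t : ℕ | ∀ c : Fin n → ℕ, (∑ v, c v) = t →
        ∃ c', PebblingReach (pathGraph n) c c' ∧
          ∃ U, IsStrongHubSet (pathGraph n) U ∧ Covers c' U}
      (2 ^ (n - 1) - 1) := by
  constructor
  · intro c hsum
    obtain ⟨c', hreach, hcov⟩ := SHAux.upper hn c (le_of_eq hsum.symm)
    refine ⟨c', hreach, {v : Fin n | 1 ≤ v.val ∧ v.val ≤ n - 2}, ⟨⟨⟨1, by omega⟩, ?_⟩, ?_⟩, ?_⟩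
    · exact ⟨le_refl 1, show (1:ℕ) ≤ n - 2 by omega⟩
    · intro x y
      obtain ⟨p, hp, hint⟩ := SHAux.exists_good_path hn x y
      exact ⟨p, hp, fun v hv => hint v hv⟩
    · intro v hv
      exact hcov v hv
  · intro t ht
    by_contra hlt
    push_neg at hlt
    have h4 : (4:ℕ) ≤ 2 ^ (n - 1) := by
      calc (4:ℕ) = 2 ^ 2 := by norm_num
      _ ≤ 2 ^ (n - 1) := SHAux.two_pow_le_two_pow (by omega)
    obtain ⟨c', hreach, U, hU, hcovU⟩ :=
      ht (fun i => if i.val = 0 then min t 1 else if i.val = n - 1 then t - 1 else 0)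
        (SHAux.sum_init hn t)
    have hphi1 : SHAux.Phi n c' ≤ t - 1 := by
      have h5 := SHAux.phi_reach hn hreach
      rw [SHAux.phi_init hn t] at h5
      exact h5
    have hphi2 : 2 ^ (n - 1) - 2 ≤ SHAux.Phi n c' :=
      SHAux.phi_final hn
        (fun j hj1 hj2 hjn => hcovU ⟨j, hjn⟩ (SHAux.hub_contains hn hU j hj1 hj2 hjn))
    omega
end

section
/- In the book graph B_n (n ≥ 2) with spine vertices a, b and page vertices u_1, ..., u_n (adjacent to a) and v_1, ..., v_n (adjacent to b), where a~b and u_i~v_i for each i, a vertex set S is a strong hub set if and only if S contains {a, b}, or S contains {a, u_1, ..., u_n}, or S contains {b, v_1, ..., v_n}. -/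
open SimpleGraph

/-- The star `S_n`: center `0` joined to the `n` leaves `1, …, n`. -/
def starGraph (n : ℕ) : SimpleGraph (Fin (n + 1)) where
  Adj x y := x ≠ y ∧ (x = 0 ∨ y = 0)
  symm := ⟨fun _ _ h => ⟨h.1.symm, h.2.symm⟩⟩
  loopless := ⟨fun _ h => h.1 rfl⟩

/-- The book `B_n = S_n □ P_2`. -/
def bookGraph (n : ℕ) : SimpleGraph (Fin (n + 1) × Fin 2) :=
  (starGraph n) □ (pathGraph 2)

/-! ### Auxiliary lemmas -/

section listwalk

lemma aux_mem_support_dropLast {V : Type*} {G : SimpleGraph V} {x y v : V}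
    (p : G.Walk x y) (hv : v ∈ p.support) (hne : v ≠ y) : v ∈ p.support.dropLast := by
  induction p with
  | nil => simp_all
  | cons h q ih =>
    rw [Walk.support_cons] at hv ⊢
    obtain ⟨c, t, hq⟩ : ∃ c t, q.support = c :: t := ⟨_, _, q.support_eq_cons⟩
    rw [hq, List.dropLast_cons₂]
    rcases List.mem_cons.1 hv with rfl | hv'
    · exact List.mem_cons_self
    · exact List.mem_cons_of_mem _ (by rw [← hq]; exact ih hv' hne)

variable {V : Type*} {G : SimpleGraph V} (S : Set V)

lemma aux_walk1 (x : V) : ∃ p : G.Walk x x, p.IsPath ∧ ∀ v ∈ p.support.tail.dropLast, v ∈ S :=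
  ⟨Walk.nil, by simp, by simp⟩

lemma aux_walk2 {x y : V} (h : G.Adj x y) :
    ∃ p : G.Walk x y, p.IsPath ∧ ∀ v ∈ p.support.tail.dropLast, v ∈ S :=
  ⟨Walk.cons h Walk.nil, by simp [Walk.isPath_def, h.ne], by simp⟩

lemma aux_walk3 {x m y : V} (h1 : G.Adj x m) (h2 : G.Adj m y) (hxy : x ≠ y) (hm : m ∈ S) :
    ∃ p : G.Walk x y, p.IsPath ∧ ∀ v ∈ p.support.tail.dropLast, v ∈ S :=
  ⟨Walk.cons h1 (Walk.cons h2 Walk.nil),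
    by simp [Walk.isPath_def, h1.ne, h2.ne, hxy],
    by simpa using hm⟩

lemma aux_walk4 {x m1 m2 y : V} (h1 : G.Adj x m1) (h2 : G.Adj m1 m2) (h3 : G.Adj m2 y)
    (hxm2 : x ≠ m2) (hxy : x ≠ y) (hm1y : m1 ≠ y) (hm1 : m1 ∈ S) (hm2 : m2 ∈ S) :
    ∃ p : G.Walk x y, p.IsPath ∧ ∀ v ∈ p.support.tail.dropLast, v ∈ S :=
  ⟨Walk.cons h1 (Walk.cons h2 (Walk.cons h3 Walk.nil)),
    by simp [Walk.isPath_def, h1.ne, h2.ne, h3.ne, hxm2, hxy, hm1y],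
    by simp; exact ⟨hm1, hm2⟩⟩

lemma aux_walk5 {x m1 m2 m3 y : V} (h1 : G.Adj x m1) (h2 : G.Adj m1 m2) (h3 : G.Adj m2 m3)
    (h4 : G.Adj m3 y) (hxm2 : x ≠ m2) (hxm3 : x ≠ m3) (hxy : x ≠ y)
    (hm13 : m1 ≠ m3) (hm1y : m1 ≠ y) (hm2y : m2 ≠ y)
    (hm1 : m1 ∈ S) (hm2 : m2 ∈ S) (hm3 : m3 ∈ S) :
    ∃ p : G.Walk x y, p.IsPath ∧ ∀ v ∈ p.support.tail.dropLast, v ∈ S :=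
  ⟨Walk.cons h1 (Walk.cons h2 (Walk.cons h3 (Walk.cons h4 Walk.nil))),
    by simp [Walk.isPath_def, h1.ne, h2.ne, h3.ne, h4.ne, hxm2, hxm3, hxy, hm13, hm1y, hm2y],
    by simp; exact ⟨hm1, hm2, hm3⟩⟩

end listwalk

section book

variable {n : ℕ}

lemma book_adj {x y : Fin (n+1) × Fin 2} : (bookGraph n).Adj x y ↔
    ((x.1 ≠ y.1 ∧ (x.1 = 0 ∨ y.1 = 0)) ∧ x.2 = y.2) ∨
    ((x.2.val + 1 = y.2.val ∨ y.2.val + 1 = x.2.val) ∧ x.1 = y.1) := by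
  simp [bookGraph, boxProd_adj, _root_.starGraph, pathGraph_adj]

lemma adj_uv (i : Fin (n+1)) : (bookGraph n).Adj (i, 0) (i, 1) := by
  rw [book_adj]; right; refine ⟨Or.inl ?_, rfl⟩; rfl

lemma adj_au {i : Fin (n+1)} (hi : i ≠ 0) : (bookGraph n).Adj (0, 0) (i, 0) := by
  rw [book_adj]; left; exact ⟨⟨Ne.symm hi, Or.inl rfl⟩, rfl⟩

lemma adj_bv {i : Fin (n+1)} (hi : i ≠ 0) : (bookGraph n).Adj (0, 1) (i, 1) := by
  rw [book_adj]; left; exact ⟨⟨Ne.symm hi, Or.inl rfl⟩, rfl⟩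

lemma pne_fst {i j : Fin (n+1)} {s t : Fin 2} (h : i ≠ j) : (i, s) ≠ (j, t) := by
  simp [Prod.ext_iff]; intro h'; exact absurd h' h

lemma pne01 {i j : Fin (n+1)} : (i, (0:Fin 2)) ≠ (j, (1:Fin 2)) := by
  simp [Prod.ext_iff]

lemma pne10 {i j : Fin (n+1)} : (i, (1:Fin 2)) ≠ (j, (0:Fin 2)) := by
  simp [Prod.ext_iff]

lemma fin_val_two (hn : 2 ≤ n) : ((2 : Fin (n+1)) : ℕ) = 2 := by
  have h : ((2 : Fin (n+1)) : ℕ) = 2 % (n+1) := rfl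
  rw [h, Nat.mod_eq_of_lt (by omega)]

lemma fin_one_ne (hn : 2 ≤ n) : (1 : Fin (n+1)) ≠ 0 := by
  simp [Fin.ext_iff, Fin.val_one]; omega

lemma fin_two_ne (hn : 2 ≤ n) : (2 : Fin (n+1)) ≠ 0 := by
  rw [Ne, Fin.ext_iff, fin_val_two hn, Fin.val_zero]; omega

lemma fin_one_ne_two (hn : 2 ≤ n) : (1 : Fin (n+1)) ≠ 2 := by
  rw [Ne, Fin.ext_iff, fin_val_two hn, show ((1 : Fin (n+1)) : ℕ) = 1 % (n+1) from rfl]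
  have h1 : 1 % (n+1) ≤ 1 := Nat.mod_le _ _
  omega

lemma fin2cases (s : Fin 2) : s = 0 ∨ s = 1 := by
  obtain ⟨v, hv⟩ := s
  interval_cases v <;> simp

lemma nbr0 {i : Fin (n+1)} (hi : i ≠ 0) {w : Fin (n+1) × Fin 2}
    (h : (bookGraph n).Adj (i, 0) w) :
    w = ((0 : Fin (n+1)), (0 : Fin 2)) ∨ w = (i, (1 : Fin 2)) := by
  rw [book_adj] at h
  obtain ⟨i', s⟩ := w
  have hs2 := s.isLt
  simp only [Prod.mk.injEq]
  rcases h with ⟨⟨hne, h0 | h0⟩, hsnd⟩ | ⟨hs, hfst⟩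
  · exact absurd h0 hi
  · left; exact ⟨h0, hsnd.symm⟩
  · right
    refine ⟨hfst.symm, ?_⟩
    simp only [Fin.val_zero] at hs
    rw [Fin.ext_iff, Fin.val_one]
    omega

lemma nbr1 {i : Fin (n+1)} (hi : i ≠ 0) {w : Fin (n+1) × Fin 2}
    (h : (bookGraph n).Adj (i, 1) w) :
    w = ((0 : Fin (n+1)), (1 : Fin 2)) ∨ w = (i, (0 : Fin 2)) := by
  rw [book_adj] at h
  obtain ⟨i', s⟩ := w
  have hs2 := s.isLt
  simp only [Prod.mk.injEq]
  rcases h with ⟨⟨hne, h0 | h0⟩, hsnd⟩ | ⟨hs, hfst⟩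
  · exact absurd h0 hi
  · left; exact ⟨h0, hsnd.symm⟩
  · right
    refine ⟨hfst.symm, ?_⟩
    simp only [Fin.val_one] at hs
    rw [Fin.ext_iff, Fin.val_zero]
    omega

/-- If `a ∉ S` then `b ∈ S` and all `v_i ∈ S`. -/
lemma keyA (hn : 2 ≤ n) {S : Set (Fin (n+1) × Fin 2)}
    (hS : IsStrongHubSet (bookGraph n) S)
    (hA : ((0 : Fin (n+1)), (0 : Fin 2)) ∉ S) :
    ((0 : Fin (n+1)), (1 : Fin 2)) ∈ S ∧
      ∀ i : Fin (n+1), i ≠ 0 → (i, (1 : Fin 2)) ∈ S := by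
  have main : ∀ i j : Fin (n+1), i ≠ 0 → j ≠ 0 → i ≠ j →
      (i, (1 : Fin 2)) ∈ S ∧ ((0 : Fin (n+1)), (1 : Fin 2)) ∈ S := by
    intro i j hi hj hij
    obtain ⟨p, hp, hint⟩ := hS.2 (i, 0) (j, 0)
    obtain ⟨w, h1, q, rfl⟩ := Walk.exists_eq_cons_of_ne (pne_fst hij) p
    rcases nbr0 hi h1 with rfl | rfl
    · exfalso
      apply hA
      apply hint
      rw [Walk.support_cons, List.tail_cons]
      exact aux_mem_support_dropLast q q.start_mem_support
        (pne_fst (Ne.symm hj))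
    · have hv : (i, (1 : Fin 2)) ∈ S := by
        apply hint
        rw [Walk.support_cons, List.tail_cons]
        exact aux_mem_support_dropLast q q.start_mem_support pne10
      obtain ⟨w2, h2, r, rfl⟩ := Walk.exists_eq_cons_of_ne pne10 q
      rcases nbr1 hi h2 with rfl | rfl
      · refine ⟨hv, hint _ ?_⟩
        rw [Walk.support_cons, List.tail_cons]
        apply aux_mem_support_dropLast _ ?_ pne10
        rw [Walk.support_cons]
        exact List.mem_cons_of_mem _ r.start_mem_support
      · exfalso
        have h' := hp.support_nodup
        simp only [Walk.support_cons, List.nodup_cons, List.mem_cons] at h'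
        exact h'.1 (Or.inr r.start_mem_support)
  constructor
  · exact (main 1 2 (fin_one_ne hn) (fin_two_ne hn) (fin_one_ne_two hn)).2
  · intro i hi
    by_cases h1 : i = (1 : Fin (n+1))
    · subst h1
      exact (main 1 2 (fin_one_ne hn) (fin_two_ne hn) (fin_one_ne_two hn)).1
    · exact (main i 1 hi (fin_one_ne hn) h1).1

/-- If `b ∉ S` then `a ∈ S` and all `u_i ∈ S`. -/
lemma keyB (hn : 2 ≤ n) {S : Set (Fin (n+1) × Fin 2)}
    (hS : IsStrongHubSet (bookGraph n) S)
    (hB : ((0 : Fin (n+1)), (1 : Fin 2)) ∉ S) :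
    ((0 : Fin (n+1)), (0 : Fin 2)) ∈ S ∧
      ∀ i : Fin (n+1), i ≠ 0 → (i, (0 : Fin 2)) ∈ S := by
  have main : ∀ i j : Fin (n+1), i ≠ 0 → j ≠ 0 → i ≠ j →
      (i, (0 : Fin 2)) ∈ S ∧ ((0 : Fin (n+1)), (0 : Fin 2)) ∈ S := by
    intro i j hi hj hij
    obtain ⟨p, hp, hint⟩ := hS.2 (i, 1) (j, 1)
    obtain ⟨w, h1, q, rfl⟩ := Walk.exists_eq_cons_of_ne (pne_fst hij) p
    rcases nbr1 hi h1 with rfl | rfl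
    · exfalso
      apply hB
      apply hint
      rw [Walk.support_cons, List.tail_cons]
      exact aux_mem_support_dropLast q q.start_mem_support
        (pne_fst (Ne.symm hj))
    · have hu : (i, (0 : Fin 2)) ∈ S := by
        apply hint
        rw [Walk.support_cons, List.tail_cons]
        exact aux_mem_support_dropLast q q.start_mem_support pne01
      obtain ⟨w2, h2, r, rfl⟩ := Walk.exists_eq_cons_of_ne pne01 q
      rcases nbr0 hi h2 with rfl | rfl
      · refine ⟨hu, hint _ ?_⟩
        rw [Walk.support_cons, List.tail_cons]
        apply aux_mem_support_dropLast _ ?_ pne01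
        rw [Walk.support_cons]
        exact List.mem_cons_of_mem _ r.start_mem_support
      · exfalso
        have h' := hp.support_nodup
        simp only [Walk.support_cons, List.nodup_cons, List.mem_cons] at h'
        exact h'.1 (Or.inr r.start_mem_support)
  constructor
  · exact (main 1 2 (fin_one_ne hn) (fin_two_ne hn) (fin_one_ne_two hn)).2
  · intro i hi
    by_cases h1 : i = (1 : Fin (n+1))
    · subst h1
      exact (main 1 2 (fin_one_ne hn) (fin_two_ne hn) (fin_one_ne_two hn)).1
    · exact (main i 1 hi (fin_one_ne hn) h1).1

/-- Sufficiency when `{a,b} ⊆ S`. -/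
lemma caseAB {S : Set (Fin (n+1) × Fin 2)}
    (ha : ((0 : Fin (n+1)), (0 : Fin 2)) ∈ S)
    (hb : ((0 : Fin (n+1)), (1 : Fin 2)) ∈ S)
    (x y : Fin (n+1) × Fin 2) :
    ∃ p : (bookGraph n).Walk x y, p.IsPath ∧ ∀ v ∈ p.support.tail.dropLast, v ∈ S := by
  obtain ⟨i, s⟩ := x
  obtain ⟨j, t⟩ := y
  rcases fin2cases s with rfl | rfl <;> rcases fin2cases t with rfl | rfl
  · by_cases hij : i = j
    · subst hij; exact aux_walk1 S _
    · by_cases hi : i = 0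
      · subst hi
        exact aux_walk2 S (adj_au fun h => hij h.symm)
      · by_cases hj : j = 0
        · subst hj; exact aux_walk2 S (adj_au hi).symm
        · exact aux_walk3 S (adj_au hi).symm (adj_au hj) (pne_fst hij) ha
  · by_cases hij : i = j
    · subst hij; exact aux_walk2 S (adj_uv i)
    · by_cases hi : i = 0
      · subst hi
        exact aux_walk3 S (adj_uv 0) (adj_bv fun h => hij h.symm) pne01 hb
      · by_cases hj : j = 0
        · subst hj; exact aux_walk3 S (adj_au hi).symm (adj_uv 0) pne01 ha
        · exact aux_walk4 S (adj_au hi).symm (adj_uv 0) (adj_bv hj)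
            pne01 pne01 pne01 ha hb
  · by_cases hij : i = j
    · subst hij; exact aux_walk2 S (adj_uv i).symm
    · by_cases hi : i = 0
      · subst hi
        exact aux_walk3 S (adj_uv 0).symm (adj_au fun h => hij h.symm) pne10 ha
      · by_cases hj : j = 0
        · subst hj; exact aux_walk3 S (adj_bv hi).symm (adj_uv 0).symm pne10 hb
        · exact aux_walk4 S (adj_bv hi).symm (adj_uv 0).symm (adj_au hj)
            pne10 pne10 pne10 hb ha
  · by_cases hij : i = j
    · subst hij; exact aux_walk1 S _
    · by_cases hi : i = 0
      · subst hi
        exact aux_walk2 S (adj_bv fun h => hij h.symm)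
      · by_cases hj : j = 0
        · subst hj; exact aux_walk2 S (adj_bv hi).symm
        · exact aux_walk3 S (adj_bv hi).symm (adj_bv hj) (pne_fst hij) hb

/-- Sufficiency when `{a} ∪ {u_i} ⊆ S`. -/
lemma caseAU {S : Set (Fin (n+1) × Fin 2)}
    (ha : ((0 : Fin (n+1)), (0 : Fin 2)) ∈ S)
    (hu : ∀ i : Fin (n+1), i ≠ 0 → (i, (0 : Fin 2)) ∈ S)
    (x y : Fin (n+1) × Fin 2) :
    ∃ p : (bookGraph n).Walk x y, p.IsPath ∧ ∀ v ∈ p.support.tail.dropLast, v ∈ S := by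
  obtain ⟨i, s⟩ := x
  obtain ⟨j, t⟩ := y
  rcases fin2cases s with rfl | rfl <;> rcases fin2cases t with rfl | rfl
  · by_cases hij : i = j
    · subst hij; exact aux_walk1 S _
    · by_cases hi : i = 0
      · subst hi
        exact aux_walk2 S (adj_au fun h => hij h.symm)
      · by_cases hj : j = 0
        · subst hj; exact aux_walk2 S (adj_au hi).symm
        · exact aux_walk3 S (adj_au hi).symm (adj_au hj) (pne_fst hij) ha
  · by_cases hij : i = j
    · subst hij; exact aux_walk2 S (adj_uv i)
    · by_cases hi : i = 0
      · subst hi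
        have hj : j ≠ 0 := fun h => hij h.symm
        exact aux_walk3 S (adj_au hj) (adj_uv j) pne01 (hu j hj)
      · by_cases hj : j = 0
        · subst hj; exact aux_walk3 S (adj_au hi).symm (adj_uv 0) pne01 ha
        · exact aux_walk4 S (adj_au hi).symm (adj_au hj) (adj_uv j)
            (pne_fst hij) pne01 pne01 ha (hu j hj)
  · by_cases hij : i = j
    · subst hij; exact aux_walk2 S (adj_uv i).symm
    · by_cases hi : i = 0
      · subst hi
        exact aux_walk3 S (adj_uv 0).symm (adj_au fun h => hij h.symm) pne10 ha
      · by_cases hj : j = 0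
        · subst hj
          exact aux_walk3 S (adj_uv i).symm (adj_au hi).symm pne10 (hu i hi)
        · exact aux_walk4 S (adj_uv i).symm (adj_au hi).symm (adj_au hj)
            pne10 pne10 (pne_fst hij) (hu i hi) ha
  · by_cases hij : i = j
    · subst hij; exact aux_walk1 S _
    · by_cases hi : i = 0
      · subst hi
        have hj : j ≠ 0 := fun h => hij h.symm
        exact aux_walk4 S (adj_uv 0).symm (adj_au hj) (adj_uv j)
          pne10 (pne_fst hij) pne01 ha (hu j hj)
      · by_cases hj : j = 0
        · subst hj
          exact aux_walk4 S (adj_uv i).symm (adj_au hi).symm (adj_uv 0)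
            pne10 (pne_fst hi) pne01 (hu i hi) ha
        · exact aux_walk5 S (adj_uv i).symm (adj_au hi).symm (adj_au hj) (adj_uv j)
            pne10 pne10 (pne_fst hij) (pne_fst hij) pne01 pne01
            (hu i hi) ha (hu j hj)

/-- Sufficiency when `{b} ∪ {v_i} ⊆ S`. -/
lemma caseBV {S : Set (Fin (n+1) × Fin 2)}
    (hb : ((0 : Fin (n+1)), (1 : Fin 2)) ∈ S)
    (hv : ∀ i : Fin (n+1), i ≠ 0 → (i, (1 : Fin 2)) ∈ S)
    (x y : Fin (n+1) × Fin 2) :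
    ∃ p : (bookGraph n).Walk x y, p.IsPath ∧ ∀ v ∈ p.support.tail.dropLast, v ∈ S := by
  obtain ⟨i, s⟩ := x
  obtain ⟨j, t⟩ := y
  rcases fin2cases s with rfl | rfl <;> rcases fin2cases t with rfl | rfl
  · by_cases hij : i = j
    · subst hij; exact aux_walk1 S _
    · by_cases hi : i = 0
      · subst hi
        have hj : j ≠ 0 := fun h => hij h.symm
        exact aux_walk4 S (adj_uv 0) (adj_bv hj) (adj_uv j).symm
          pne01 (pne_fst hij) pne10 hb (hv j hj)
      · by_cases hj : j = 0
        · subst hj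
          exact aux_walk4 S (adj_uv i) (adj_bv hi).symm (adj_uv 0).symm
            pne01 (pne_fst hi) pne10 (hv i hi) hb
        · exact aux_walk5 S (adj_uv i) (adj_bv hi).symm (adj_bv hj) (adj_uv j).symm
            pne01 pne01 (pne_fst hij) (pne_fst hij) pne10 pne10
            (hv i hi) hb (hv j hj)
  · by_cases hij : i = j
    · subst hij; exact aux_walk2 S (adj_uv i)
    · by_cases hi : i = 0
      · subst hi
        exact aux_walk3 S (adj_uv 0) (adj_bv fun h => hij h.symm) pne01 hb
      · by_cases hj : j = 0
        · subst hj
          exact aux_walk3 S (adj_uv i) (adj_bv hi).symm pne01 (hv i hi)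
        · exact aux_walk4 S (adj_uv i) (adj_bv hi).symm (adj_bv hj)
            pne01 pne01 (pne_fst hij) (hv i hi) hb
  · by_cases hij : i = j
    · subst hij; exact aux_walk2 S (adj_uv i).symm
    · by_cases hi : i = 0
      · subst hi
        have hj : j ≠ 0 := fun h => hij h.symm
        exact aux_walk3 S (adj_bv hj) (adj_uv j).symm pne10 (hv j hj)
      · by_cases hj : j = 0
        · subst hj
          exact aux_walk3 S (adj_bv hi).symm (adj_uv 0).symm pne10 hb
        · exact aux_walk4 S (adj_bv hi).symm (adj_bv hj) (adj_uv j).symm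
            (pne_fst hij) pne10 pne10 hb (hv j hj)
  · by_cases hij : i = j
    · subst hij; exact aux_walk1 S _
    · by_cases hi : i = 0
      · subst hi
        exact aux_walk2 S (adj_bv fun h => hij h.symm)
      · by_cases hj : j = 0
        · subst hj; exact aux_walk2 S (adj_bv hi).symm
        · exact aux_walk3 S (adj_bv hi).symm (adj_bv hj) (pne_fst hij) hb

end book

/-- In `B_n` (`n ≥ 2`), with `a = (0,0)`, `b = (0,1)`, `u_i = (i,0)`, `v_i = (i,1)`,
a set `S` is a strong hub set iff it contains `{a, b}`, or `{a, u_1, …, u_n}`,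
or `{b, v_1, …, v_n}`. -/
theorem stmt13 (n : ℕ) (hn : 2 ≤ n) (S : Set (Fin (n + 1) × Fin 2)) :
    IsStrongHubSet (bookGraph n) S ↔
      (((0 : Fin (n + 1)), (0 : Fin 2)) ∈ S ∧ ((0 : Fin (n + 1)), (1 : Fin 2)) ∈ S) ∨
      (((0 : Fin (n + 1)), (0 : Fin 2)) ∈ S ∧
        ∀ i : Fin (n + 1), i ≠ 0 → (i, (0 : Fin 2)) ∈ S) ∨
      (((0 : Fin (n + 1)), (1 : Fin 2)) ∈ S ∧
        ∀ i : Fin (n + 1), i ≠ 0 → (i, (1 : Fin 2)) ∈ S) := by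
  constructor
  · intro hS
    by_cases ha : ((0 : Fin (n+1)), (0 : Fin 2)) ∈ S
    · by_cases hb : ((0 : Fin (n+1)), (1 : Fin 2)) ∈ S
      · exact Or.inl ⟨ha, hb⟩
      · exact Or.inr (Or.inl ⟨ha, (keyB hn hS hb).2⟩)
    · exact Or.inr (Or.inr (keyA hn hS ha))
  · rintro (⟨ha, hb⟩ | ⟨ha, hu⟩ | ⟨hb, hv⟩)
    · exact ⟨⟨_, ha⟩, caseAB ha hb⟩
    · exact ⟨⟨_, ha⟩, caseAU ha hu⟩
    · exact ⟨⟨_, hb⟩, caseBV hb hv⟩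
end

section
/- In the cycle C_n with vertices v_1, ..., v_n in cyclic order and n ≥ 4, a vertex set S is a strong hub set if and only if S contains all of the vertices except possibly two adjacent vertices; equivalently, up to rotation, S ⊇ {v_1, v_2, ..., v_{n-2}}. -/
open SimpleGraph

set_option linter.unusedSectionVars false

open Fin.NatCast

namespace StrongHubAux

lemma tail_dropLast_eq {α : Type*} (l : List α) : l.tail.dropLast = l.dropLast.tail := by
  cases l with
  | nil => rfl
  | cons a t =>
    cases t with
    | nil => rfl
    | cons b t' => simp [List.dropLast_cons₂]

lemma mem_reverse_tail_dropLast {α : Type*} {l : List α} {v : α} :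
    v ∈ l.reverse.tail.dropLast ↔ v ∈ l.tail.dropLast := by
  have hrd : ∀ (m : List α), m.reverse.dropLast = m.tail.reverse := by
    intro m
    have h := List.tail_reverse (l := m.reverse)
    rw [List.reverse_reverse] at h
    rw [h, List.reverse_reverse]
  rw [List.tail_reverse, hrd, List.mem_reverse, tail_dropLast_eq]

variable {n : ℕ} [NeZero n]

lemma val_one_of (h2 : 2 ≤ n) : ((1 : Fin n) : ℕ) = 1 := by
  rw [Fin.val_one']; exact Nat.mod_eq_of_lt (by omega)

lemma adj_succ (h2 : 2 ≤ n) (u : Fin n) : (cycleGraph n).Adj u (u + 1) := by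
  rw [cycleGraph_adj']
  right
  rw [add_sub_cancel_left, val_one_of h2]

def arcWalk (h2 : 2 ≤ n) (u : Fin n) : (k : ℕ) → (cycleGraph n).Walk u (u + (k : Fin n))
  | 0 => Walk.nil.copy rfl (by simp)
  | (k+1) => (Walk.cons (adj_succ h2 u) (arcWalk h2 (u+1) k)).copy rfl
      (by push_cast; rw [add_assoc, add_comm (1 : Fin n)])

lemma arcWalk_support (h2 : 2 ≤ n) (u : Fin n) (k : ℕ) :
    (arcWalk h2 u k).support = (List.range (k+1)).map (fun i : ℕ => u + (i : Fin n)) := by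
  induction k generalizing u with
  | zero => simp [arcWalk, List.range_succ]
  | succ k ih =>
    rw [arcWalk, Walk.support_copy, Walk.support_cons, ih,
      @List.range_succ_eq_map (k+1), List.map_cons, List.map_map]
    congr 1
    · simp
    · apply List.map_congr_left
      intro i _
      simp only [Function.comp_apply]
      push_cast
      rw [add_assoc, add_comm (1 : Fin n)]

lemma arcWalk_isPath (h2 : 2 ≤ n) (u : Fin n) {k : ℕ} (hk : k < n) :
    (arcWalk h2 u k).IsPath := by
  rw [Walk.isPath_def, arcWalk_support]
  refine List.Nodup.map_on ?_ List.nodup_range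
  intro i hi i' hi' hii
  rw [List.mem_range] at hi hi'
  have h1 : ((i : Fin n) : ℕ) = i := Fin.val_cast_of_lt (by omega)
  have h2' : ((i' : Fin n) : ℕ) = i' := Fin.val_cast_of_lt (by omega)
  have := add_left_cancel hii
  rw [← h1, ← h2', this]

lemma arcWalk_internal (h2 : 2 ≤ n) (u : Fin n) (k : ℕ) {v : Fin n}
    (hv : v ∈ (arcWalk h2 u k).support.tail.dropLast) :
    ∃ i : ℕ, 0 < i ∧ i < k ∧ v = u + (i : Fin n) := by
  rw [arcWalk_support, ← List.map_tail, ← List.map_dropLast] at hv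
  obtain ⟨i, hi, rfl⟩ := List.mem_map.mp hv
  refine ⟨i, ?_, ?_, rfl⟩ <;>
  · rw [tail_dropLast_eq, List.range_succ, List.dropLast_concat] at hi
    rcases k with _ | k'
    · simp at hi
    · rw [List.range_succ_eq_map, List.tail_cons] at hi
      obtain ⟨j, hj, rfl⟩ := List.mem_map.mp hi
      rw [List.mem_range] at hj
      omega

lemma mem_support_cases {x y : Fin n} (p : (cycleGraph n).Walk x y) {v : Fin n}
    (hv : v ∈ p.support) :
    v = x ∨ v = y ∨ v ∈ p.support.tail.dropLast := by
  induction p with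
  | nil => left; simpa using hv
  | @cons u w y h p ih =>
    rw [Walk.support_cons] at hv ⊢
    rw [List.tail_cons]
    rcases List.mem_cons.mp hv with rfl | hv'
    · left; rfl
    · rcases ih hv' with rfl | rfl | h'
      · -- v = w, start of p
        rcases hp : p.support.tail with _ | ⟨c, t⟩
        · have : y ∈ p.support := Walk.end_mem_support p
          rw [p.support_eq_cons, hp] at this
          simp at this
          right; left; exact this.symm
        · right; right
          rw [p.support_eq_cons, hp]
          simp
      · right; left; rfl
      · right; right
        rw [tail_dropLast_eq] at h'
        exact List.mem_of_mem_tail h'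

lemma stays_in_arc (a b : Fin n) {x y : Fin n} (p : (cycleGraph n).Walk x y)
    (hav : ∀ v ∈ p.support, v ≠ a ∧ v ≠ b)
    (hd : (b - a).val < n)
    (hx : 0 < (x - a).val ∧ (x - a).val < (b - a).val) :
    0 < (y - a).val ∧ (y - a).val < (b - a).val := by
  induction p with
  | nil => exact hx
  | @cons u w y hadj p ih =>
    have h2 : 2 ≤ n := by
      rcases hx with ⟨h1, h2⟩
      have := (b - a).isLt
      omega
    have hwab : w ≠ a ∧ w ≠ b := hav w (by rw [Walk.support_cons]; exact List.mem_cons_of_mem _ p.start_mem_support)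
    have hw : 0 < (w - a).val ∧ (w - a).val < (b - a).val := by
      set d := (b - a).val with hdd
      set q := (u - a).val with hq
      have hqd : 0 < q ∧ q < d := hx
      rw [cycleGraph_adj'] at hadj
      rcases hadj with h1 | h1
      · -- (u - w).val = 1, so u = w + 1, w = u - 1
        have huw : u - w = 1 := by
          apply Fin.val_injective
          rw [h1, val_one_of h2]
        have hwu : w = u - 1 := by
          rw [← huw]; abel
        have hcast : u - a = ((q : ℕ) : Fin n) := (Fin.cast_val_eq_self _).symm
        have hq1 : ((q : ℕ) : Fin n) = ((q - 1 : ℕ) : Fin n) + 1 := by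
          have h' : q - 1 + 1 = q := by omega
          calc ((q : ℕ) : Fin n) = ((q - 1 + 1 : ℕ) : Fin n) := by rw [h']
            _ = ((q - 1 : ℕ) : Fin n) + 1 := Nat.cast_add_one _
        have hsub : w - a = ((q - 1 : ℕ) : Fin n) := by
          rw [hwu, sub_right_comm, hcast, hq1, add_sub_cancel_right]
        have hval : (w - a).val = q - 1 := by
          rw [hsub, Fin.val_cast_of_lt (by omega)]
        have : q - 1 ≠ 0 := by
          intro h0
          have : w - a = 0 := by
            apply Fin.val_injective; rw [hval, h0]; rfl
          exact hwab.1 (sub_eq_zero.mp this)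
        constructor
        · omega
        · omega
      · -- (w - u).val = 1, so w = u + 1
        have hwu : w = u + 1 := by
          have : w - u = 1 := by
            apply Fin.val_injective; rw [h1, val_one_of h2]
          rw [← this]; abel
        have hval : (w - a).val = q + 1 := by
          rw [hwu, add_sub_right_comm]
          rw [Fin.val_add_eq_of_add_lt]
          · rw [val_one_of h2]
          · rw [val_one_of h2]; omega
        have : q + 1 ≠ d := by
          intro h0
          have : w - a = b - a := by
            apply Fin.val_injective; rw [hval, h0]
          exact hwab.2 (sub_left_inj.mp this)
        refine ⟨by omega, by omega⟩
    exact ih (fun v hv => hav v (by rw [Walk.support_cons]; exact List.mem_cons_of_mem _ hv)) hw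

end StrongHubAux

open StrongHubAux

/-- In `C_n` (`n ≥ 4`), `S` is a strong hub set iff, up to rotation, `S` contains
`n - 2` consecutive vertices, i.e. all vertices except possibly two adjacent ones. -/
theorem stmt16 (n : ℕ) (hn : 4 ≤ n) (S : Set (Fin n)) :
    IsStrongHubSet (cycleGraph n) S ↔
      ∃ j : Fin n, ∀ i : Fin n,
        (i : ℕ) ≠ (j : ℕ) → (i : ℕ) ≠ ((j : ℕ) + 1) % n → i ∈ S := by
  haveI : NeZero n := ⟨by omega⟩
  have h2 : 2 ≤ n := by omega
  have hv1 : Fin.val (1 : Fin n) = 1 := val_one_of h2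
  have hv0 : Fin.val (0 : Fin n) = 0 := by simp
  have hv2 : Fin.val ((1 : Fin n) + 1) = 2 := by
    rw [Fin.val_add_eq_of_add_lt] <;> rw [hv1] <;> omega
  have hv3 : Fin.val ((1 : Fin n) + 1 + 1) = 3 := by
    rw [Fin.val_add_eq_of_add_lt] <;> rw [hv2, hv1] <;> omega
  have hconv : ∀ j i : Fin n, ((i : ℕ) ≠ ((j : ℕ) + 1) % n) ↔ i ≠ j + 1 := by
    intro j i
    have h : Fin.val (j + 1) = ((j : ℕ) + 1) % n := by
      rw [Fin.val_add, hv1]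
    rw [← h, ne_eq, ne_eq, Fin.val_eq_val]
  have hRHS : (∃ j : Fin n, ∀ i : Fin n,
        (i : ℕ) ≠ (j : ℕ) → (i : ℕ) ≠ ((j : ℕ) + 1) % n → i ∈ S) ↔
      (∃ j : Fin n, ∀ i : Fin n, i ≠ j → i ≠ j + 1 → i ∈ S) := by
    apply exists_congr; intro j
    apply forall_congr'; intro i
    rw [hconv j i, ne_eq, ne_eq, Fin.val_eq_val]
  rw [hRHS]
  constructor
  · -- forward
    rintro ⟨-, hhub⟩
    by_contra hcon
    push_neg at hcon
    obtain ⟨a, b, haS, hbS, hba, hba1, hab1⟩ :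
        ∃ a b : Fin n, a ∉ S ∧ b ∉ S ∧ b ≠ a ∧ b ≠ a + 1 ∧ a ≠ b + 1 := by
      obtain ⟨a, -, -, haS⟩ := hcon 0
      obtain ⟨b, hb1, hb2, hbS⟩ := hcon a
      by_cases hab : a = b + 1
      · obtain ⟨c, hc1, hc2, hcS⟩ := hcon b
        by_cases hca : c = a + 1
        · refine ⟨b, c, hbS, hcS, hc1, hc2, ?_⟩
          intro h
          rw [hca, hab, add_assoc, add_assoc] at h
          have h0 := left_eq_add.mp h
          rw [← add_assoc] at h0
          have h1 := congrArg Fin.val h0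
          rw [hv3, hv0] at h1
          omega
        · refine ⟨a, c, haS, hcS, by rwa [hab], hca, ?_⟩
          intro h
          apply hc1
          rw [hab] at h
          exact add_right_cancel h.symm
      · exact ⟨a, b, haS, hbS, hb1, hb2, hab⟩
    set d := ((b - a) : Fin n).val with hdd
    have hdlt : d < n := Fin.is_lt _
    have hd0 : d ≠ 0 := by
      rw [hdd]
      intro h
      exact hba (sub_eq_zero.mp (Fin.val_injective (by rw [h, hv0])))
    have hd1 : d ≠ 1 := by
      intro h
      apply hba1
      have hba' : b - a = 1 := by
        apply Fin.val_injective
        rw [← hdd, h, hv1]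
      have : a + 1 = b := by rw [← hba']; abel
      exact this.symm
    have hdn1 : d ≠ n - 1 := by
      intro h
      apply hab1
      have hab' : a - b = 1 := by
        apply Fin.val_injective
        have h1 : a - b = -(b - a) := by abel
        rw [h1, Fin.coe_neg, ← hdd, h, hv1, show n - (n - 1) = 1 by omega]
        exact Nat.mod_eq_of_lt (by omega)
      have : b + 1 = a := by rw [← hab']; abel
      exact this.symm
    have hd2 : 2 ≤ d := by omega
    have hdn2 : d ≤ n - 2 := by omega
    set x := a + 1 with hx
    set y := b + 1 with hy
    have hxa : (x - a).val = 1 := by rw [hx, add_sub_cancel_left, hv1]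
    have hya : (y - a).val = d + 1 := by
      rw [hy, add_sub_right_comm, Fin.val_add_eq_of_add_lt] <;> rw [← hdd, hv1]
      omega
    obtain ⟨p, hp, hint⟩ := hhub x y
    have hav : ∀ v ∈ p.support, v ≠ a ∧ v ≠ b := by
      intro v hv
      rcases mem_support_cases p hv with rfl | rfl | h'
      · constructor
        · intro h; rw [h, sub_self, hv0] at hxa; omega
        · intro h; rw [h, ← hdd] at hxa; omega
      · constructor
        · intro h; rw [h, sub_self, hv0] at hya; omega
        · intro h; rw [h, ← hdd] at hya; omega
      · have hvS := hint v h'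
        exact ⟨fun h => haS (h ▸ hvS), fun h => hbS (h ▸ hvS)⟩
    have := stays_in_arc a b p hav (by rw [← hdd]; exact hdlt)
      (by rw [hxa, ← hdd]; exact ⟨one_pos, by omega⟩)
    rw [hya, ← hdd] at this
    omega
  · -- backward
    rintro ⟨j, hj⟩
    constructor
    · refine ⟨j + 1 + 1, hj _ ?_ ?_⟩
      · intro h
        rw [add_assoc] at h
        have h0 := left_eq_add.mp h.symm
        have h1 := congrArg Fin.val h0
        rw [hv2, hv0] at h1
        omega
      · intro h
        have h0 : (1 : Fin n) = 0 := by
          apply add_left_cancel (a := j + 1)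
          rw [add_zero]; exact h
        have h1 := congrArg Fin.val h0
        rw [hv1, hv0] at h1
        omega
    · intro x y
      set k := ((y - x) : Fin n).val with hkk
      have hklt : k < n := Fin.is_lt _
      have hyx : y = x + (k : Fin n) := by
        rw [hkk, Fin.cast_val_eq_self]
        abel
      set pj := ((j - x) : Fin n).val with hpj
      set pj1 := ((j + 1 - x) : Fin n).val with hpj1
      have hpjlt : pj < n := Fin.is_lt _
      have hrel : pj1 = (pj + 1) % n := by
        rw [hpj1, add_sub_right_comm, Fin.val_add, hv1, hpj]
      by_cases hf : (0 < pj ∧ pj < k) ∨ (0 < pj1 ∧ pj1 < k)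
      · have hk1 : 1 ≤ k := by rcases hf with ⟨h1, h2⟩ | ⟨h1, h2⟩ <;> omega
        have hple : pj ≤ k ∧ pj1 ≤ k := by
          rcases hf with ⟨h1, h2⟩ | ⟨h1, h2⟩
          · have : pj1 = pj + 1 := by
              rw [hrel]; exact Nat.mod_eq_of_lt (by omega)
            omega
          · by_cases hpn : pj + 1 < n
            · have : pj1 = pj + 1 := by rw [hrel]; exact Nat.mod_eq_of_lt hpn
              omega
            · have hn' : pj + 1 = n := by omega
              rw [hrel, hn', Nat.mod_self] at h1
              omega
        have hend : y + ((n - k : ℕ) : Fin n) = x := by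
          rw [hyx, add_assoc, ← Nat.cast_add, show k + (n - k) = n by omega,
            Fin.natCast_self, add_zero]
        refine ⟨((arcWalk h2 y (n - k)).copy rfl hend).reverse, ?_, ?_⟩
        · exact Walk.IsPath.reverse
            ((Walk.isPath_copy _ rfl hend).mpr (arcWalk_isPath h2 y (show n - k < n by omega)))
        · intro v hv
          rw [Walk.support_reverse, mem_reverse_tail_dropLast, Walk.support_copy] at hv
          obtain ⟨i, hi0, hik, rfl⟩ := arcWalk_internal h2 y (n - k) hv
          have hvx : ((y + (i : Fin n)) - x).val = k + i := by
            rw [hyx, add_sub_right_comm, add_sub_cancel_left, ← Nat.cast_add,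
              Fin.val_cast_of_lt (by omega)]
          refine hj _ ?_ ?_
          · intro h
            rw [h, ← hpj] at hvx
            omega
          · intro h
            rw [h, ← hpj1] at hvx
            omega
      · push_neg at hf
        refine ⟨(arcWalk h2 x k).copy rfl hyx.symm, ?_, ?_⟩
        · exact (Walk.isPath_copy _ rfl hyx.symm).mpr (arcWalk_isPath h2 x hklt)
        · intro v hv
          rw [Walk.support_copy] at hv
          obtain ⟨i, hi0, hik, rfl⟩ := arcWalk_internal h2 x k hv
          have hvx : ((x + (i : Fin n)) - x).val = i := by
            rw [add_sub_cancel_left, Fin.val_cast_of_lt (by omega)]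
          refine hj _ ?_ ?_
          · intro h
            rw [h, ← hpj] at hvx
            exact absurd hik (by omega)
          · intro h
            rw [h, ← hpj1] at hvx
            exact absurd hik (by omega)
end

section
/- For the even cycle C_{2k} with k ≥ 2: if all 2^k + 2^{k-1} - 4 pebbles are placed on the single vertex v_1, then no sequence of pebbling moves produces a configuration covering some strong hub set of C_{2k}. Hence h_s^*(C_{2k}) ≥ 2^k + 2^{k-1} - 3. -/
open SimpleGraph

namespace Stmt17Aux

open Finset

lemma mod_eq_one {n s : ℕ} (hs : s < 2*n) (h : s % n = 1) : s = 1 ∨ s = n + 1 := by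
  rcases Nat.lt_or_ge s n with h1 | h1
  · left; rwa [Nat.mod_eq_of_lt h1] at h
  · right
    have hsub : s - n < n := by omega
    have : s % n = (s - n) % n := by
      conv_lhs => rw [show s = n + (s - n) by omega]
      rw [Nat.add_mod_left]
    rw [this, Nat.mod_eq_of_lt hsub] at h
    omega

lemma sub_val_eq_one {n : ℕ} (hn : 2 ≤ n) {A B : Fin n} (h : (A - B).val = 1) :
    A.val = B.val + 1 ∨ (B.val = n - 1 ∧ A.val = 0) := by
  rw [Fin.sub_def] at h
  simp only at h
  have hA := A.is_lt
  have hB := B.is_lt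
  have := mod_eq_one (s := n - B.val + A.val) (by omega) h
  omega

lemma adj_rel {n : ℕ} (hn : 2 ≤ n) {u v : Fin n} (h : (cycleGraph n).Adj u v) (a : Fin n) :
    (v - a).val = (u - a).val + 1 ∨ (u - a).val = (v - a).val + 1 ∨
    ((u - a).val = n - 1 ∧ (v - a).val = 0) ∨ ((v - a).val = n - 1 ∧ (u - a).val = 0) := by
  haveI : NeZero n := ⟨by omega⟩
  rw [cycleGraph_adj'] at h
  rcases h with h | h
  · rw [← sub_sub_sub_cancel_right u v a] at h
    rcases sub_val_eq_one hn h with h | h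
    · right; left; exact h
    · right; right; right; exact h
  · rw [← sub_sub_sub_cancel_right v u a] at h
    rcases sub_val_eq_one hn h with h | h
    · left; exact h
    · right; right; left; exact h

lemma walk_side {n : ℕ} (hn : 2 ≤ n) (a : Fin n) (m : ℕ) :
    ∀ {x y : Fin n} (p : (cycleGraph n).Walk x y),
    (∀ s ∈ p.support, (s - a).val ≠ 0 ∧ (s - a).val ≠ m) →
    ((0 < (x-a).val ∧ (x-a).val < m) ↔ (0 < (y-a).val ∧ (y-a).val < m)) := by
  intro x y p
  induction p with
  | nil => intro _; rfl
  | @cons x w y hadj q ih =>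
    intro hs
    have hx : (x - a).val ≠ 0 ∧ (x - a).val ≠ m := hs x (by simp)
    have hw : (w - a).val ≠ 0 ∧ (w - a).val ≠ m := by
      refine hs w ?_
      simp [SimpleGraph.Walk.support_cons]
    have step : ((0 < (x-a).val ∧ (x-a).val < m) ↔ (0 < (w-a).val ∧ (w-a).val < m)) := by
      have hrel := adj_rel hn hadj a
      have h1 := (x - a).is_lt
      have h2 := (w - a).is_lt
      omega
    refine step.trans (ih ?_)
    intro s hs'
    exact hs s (by simp [SimpleGraph.Walk.support_cons, hs'])

lemma val_ne_of_ne_sub {n : ℕ} [NeZero n] {s a b : Fin n} (h1 : s ≠ a) (h2 : s ≠ b) :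
    (s - a).val ≠ 0 ∧ (s - a).val ≠ (b - a).val := by
  constructor
  · intro h
    apply h1
    have : s - a = 0 := Fin.ext (by simpa using h)
    exact sub_eq_zero.mp this
  · intro h
    apply h2
    have : s - a = b - a := Fin.ext h
    exact sub_left_injective this

lemma support_cases {V : Type*} {G : SimpleGraph V} {x y : V} (p : G.Walk x y)
    {s : V} (hs : s ∈ p.support) : s = x ∨ s = y ∨ s ∈ p.support.tail.dropLast := by
  rw [p.support_eq_cons] at hs
  rcases List.mem_cons.mp hs with h | h
  · exact Or.inl h
  · by_cases ht : p.support.tail = []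
    · rw [ht] at h; simp at h
    · rw [← List.dropLast_append_getLast ht] at h
      rcases List.mem_append.mp h with h | h
      · exact Or.inr (Or.inr h)
      · right; left
        have hgl : p.support.tail.getLast ht = y := by
          rw [List.getLast_tail]
          exact p.getLast_support
        simpa [hgl] using h

lemma hub_pair {n : ℕ} (hn : 4 ≤ n) {U : Set (Fin n)} (hU : IsStrongHubSet (cycleGraph n) U)
    {a b : Fin n} (ha : a ∉ U) (hb : b ∉ U) : a = b ∨ (cycleGraph n).Adj a b := by
  haveI : NeZero n := ⟨by omega⟩
  by_contra hcon
  push_neg at hcon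
  obtain ⟨hne, hnadj⟩ := hcon
  set m := (b - a).val with hm
  have hmlt : m < n := (b - a).is_lt
  have hm0 : m ≠ 0 := by
    intro h
    have hz : b - a = 0 := Fin.ext (by simp only [Fin.val_zero]; exact h)
    exact hne (sub_eq_zero.mp hz).symm
  have h1v : ((1 : Fin n) : ℕ) = 1 := by
    rw [Fin.val_one']; exact Nat.mod_eq_of_lt (by omega)
  have hm1 : m ≠ 1 := by
    intro h
    exact hnadj ((cycleGraph_adj' (u := a) (v := b)).mpr (Or.inr h)).symm.symm
  have hmn1 : m ≠ n - 1 := by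
    intro h
    apply hnadj
    rw [cycleGraph_adj']
    left
    rw [hm, Fin.sub_def] at h
    simp only at h
    rw [Fin.sub_def]
    simp only
    have hA := a.is_lt; have hB := b.is_lt
    rcases Nat.lt_or_ge (n - a.val + b.val) n with hc | hc
    · rw [Nat.mod_eq_of_lt hc] at h
      have : n - b.val + a.val = n + 1 := by omega
      rw [this]
      simp [Nat.add_mod_left, Nat.mod_eq_of_lt (show 1 < n by omega)]
    · have he : (n - a.val + b.val) % n = (n - a.val + b.val - n) % n := by
        conv_lhs => rw [show n - a.val + b.val = n + (n - a.val + b.val - n) by omega]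
        rw [Nat.add_mod_left]
      rw [he, Nat.mod_eq_of_lt (by omega)] at h
      have : n - b.val + a.val = 1 := by omega
      rw [this, Nat.mod_eq_of_lt (by omega)]
  set x := a + 1 with hx
  set y := a - 1 with hy
  obtain ⟨p, _, hint⟩ := hU.2 x y
  have hxa : (x - a).val = 1 := by rw [hx, add_sub_cancel_left, h1v]
  have hya : (y - a).val = n - 1 := by
    rw [hy, sub_sub_cancel_left, show (-1 : Fin n) = 0 - 1 by rw [zero_sub], Fin.sub_def]
    simp only [Fin.val_zero, h1v, Nat.add_zero]
    exact Nat.mod_eq_of_lt (by omega)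
  have hsupp : ∀ s ∈ p.support, (s - a).val ≠ 0 ∧ (s - a).val ≠ m := by
    intro s hs
    rcases support_cases p hs with rfl | rfl | h
    · simp only [hxa]; omega
    · simp only [hya]; omega
    · have hsU := hint s h
      have h1 : s ≠ a := fun h' => ha (h' ▸ hsU)
      have h2 : s ≠ b := fun h' => hb (h' ▸ hsU)
      exact val_ne_of_ne_sub h1 h2
  have := walk_side (by omega) a m p hsupp
  rw [hxa, hya] at this
  omega

lemma pairwise_card {n : ℕ} (hn : 4 ≤ n) {S : Finset (Fin n)}
    (h : ∀ a ∈ S, ∀ b ∈ S, a = b ∨ (cycleGraph n).Adj a b) : S.card ≤ 2 := by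
  by_contra hc
  push_neg at hc
  obtain ⟨a, ha, b, hb, c, hcS, hab, hac, hbc⟩ := Finset.two_lt_card.mp hc
  haveI : NeZero n := ⟨by omega⟩
  have h1 := (h a ha b hb).resolve_left hab
  have h2 := (h a ha c hcS).resolve_left hac
  have h3 := (h b hb c hcS).resolve_left hbc
  have r1 := adj_rel (by omega) h1 0
  have r2 := adj_rel (by omega) h2 0
  have r3 := adj_rel (by omega) h3 0
  simp only [sub_zero] at r1 r2 r3
  have hv1 : a.val ≠ b.val := fun h => hab (Fin.ext h)
  have hv2 : a.val ≠ c.val := fun h => hac (Fin.ext h)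
  have hv3 : b.val ≠ c.val := fun h => hbc (Fin.ext h)
  have := a.is_lt; have := b.is_lt; have := c.is_lt
  omega

def wf (n : ℕ) (i : Fin n) : ℕ := 2 ^ min i.val (n - i.val)

lemma wf_adj {n : ℕ} (hn : 2 ≤ n) {u v : Fin n} (h : (cycleGraph n).Adj u v) :
    wf n v ≤ 2 * wf n u := by
  haveI : NeZero n := ⟨by omega⟩
  have hrel := adj_rel hn h 0
  simp only [sub_zero] at hrel
  have h1 := u.is_lt
  have h2 := v.is_lt
  have hle : min v.val (n - v.val) ≤ min u.val (n - u.val) + 1 := by omega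
  calc wf n v ≤ 2 ^ (min u.val (n - u.val) + 1) := Nat.pow_le_pow_right (by omega) hle
    _ = 2 * wf n u := by rw [pow_succ, mul_comm]; rfl

lemma move_potential {n : ℕ} (hn : 2 ≤ n) {c c' : Fin n → ℕ}
    (h : PebblingMove (cycleGraph n) c c') :
    ∑ i, c' i * wf n i ≤ ∑ i, c i * wf n i := by
  obtain ⟨u, v, hadj, hcu, rfl⟩ := h
  have huv : u ≠ v := hadj.ne
  have split : ∀ f : Fin n → ℕ,
      ∑ i, f i = f u + (f v + ∑ i ∈ (univ.erase u).erase v, f i) := by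
    intro f
    rw [Finset.add_sum_erase _ f (Finset.mem_erase.mpr ⟨huv.symm, Finset.mem_univ v⟩),
      Finset.add_sum_erase _ f (Finset.mem_univ u)]
  rw [split, split]
  have hrest : ∑ i ∈ (univ.erase u).erase v,
      (if i = u then c u - 2 else if i = v then c v + 1 else c i) * wf n i
      = ∑ i ∈ (univ.erase u).erase v, c i * wf n i := by
    refine Finset.sum_congr rfl ?_
    intro i hi
    have h1 : i ≠ v := (Finset.mem_erase.mp hi).1
    have h2 : i ≠ u := (Finset.mem_erase.mp (Finset.mem_erase.mp hi).2).1
    simp [h1, h2]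
  rw [hrest]
  have e1 : ((fun w => if w = u then c u - 2 else if w = v then c v + 1 else c w) u) = c u - 2 := by
    simp
  have e2 : ((fun w => if w = u then c u - 2 else if w = v then c v + 1 else c w) v) = c v + 1 := by
    simp [huv.symm]
  rw [e1, e2]
  have hwv := wf_adj hn hadj
  have hcueq : c u * wf n u = (c u - 2) * wf n u + 2 * wf n u := by
    conv_lhs => rw [show c u = (c u - 2) + 2 by omega]
    rw [Nat.add_mul]
  have hcv : (c v + 1) * wf n v = c v * wf n v + wf n v := by rw [Nat.add_mul, one_mul]
  linarith

lemma reach_potential {n : ℕ} (hn : 2 ≤ n) {c c' : Fin n → ℕ}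
    (h : PebblingReach (cycleGraph n) c c') :
    ∑ i, c' i * wf n i ≤ ∑ i, c i * wf n i := by
  induction h with
  | refl => exact le_refl _
  | tail _ hstep ih => exact le_trans (move_potential hn hstep) ih

lemma sum_single {n : ℕ} (hn : 2 ≤ n) (m : ℕ) (g : Fin n → ℕ) (hg : g ⟨0, by omega⟩ = 1) :
    ∑ i : Fin n, (if (i : ℕ) = 0 then m else 0) * g i = m := by
  haveI : NeZero n := ⟨by omega⟩
  have key : ∀ i : Fin n, (if (i : ℕ) = 0 then m else 0) * g i = if i = 0 then m else 0 := by
    intro i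
    by_cases h : i = 0
    · subst h
      have h0 : ((0 : Fin n) : ℕ) = 0 := rfl
      rw [if_pos h0, if_pos rfl, show (0 : Fin n) = ⟨0, by omega⟩ from rfl, hg, mul_one]
    · have hv : (i : ℕ) ≠ 0 := fun hv => h (Fin.ext hv)
      rw [if_neg hv, if_neg h, zero_mul]
  rw [Finset.sum_congr rfl (fun i _ => key i), Finset.sum_ite_eq' univ 0 (fun _ => m),
    if_pos (Finset.mem_univ _)]

lemma pow2sum : ∀ N : ℕ, ∑ i ∈ Finset.range N, 2 ^ i = 2 ^ N - 1 := by
  intro N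
  induction N with
  | zero => simp
  | succ n ih =>
    rw [Finset.sum_range_succ, ih, pow_succ]
    have : 1 ≤ 2 ^ n := Nat.one_le_two_pow
    set A := 2 ^ n
    omega

lemma total (k : ℕ) (hk : 1 ≤ k) :
    ∑ i : Fin (2*k), wf (2*k) i = 3 * 2 ^ k - 3 := by
  have e : ∑ i : Fin (2*k), wf (2*k) i = ∑ i ∈ Finset.range (2*k), 2 ^ min i (2*k - i) :=
    Fin.sum_univ_eq_sum_range (fun i => 2 ^ min i (2*k - i)) (2*k)
  rw [e, Finset.range_eq_Ico, ← Finset.sum_Ico_consecutive _ (Nat.zero_le k) (show k ≤ 2*k by omega)]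
  have h1 : ∑ i ∈ Finset.Ico 0 k, 2 ^ min i (2*k - i) = ∑ i ∈ Finset.range k, 2 ^ i := by
    rw [← Finset.range_eq_Ico]
    refine Finset.sum_congr rfl (fun i hi => ?_)
    rw [Finset.mem_range] at hi
    rw [Nat.min_eq_left (by omega)]
  have h2 : ∑ i ∈ Finset.Ico k (2*k), 2 ^ min i (2*k - i) = ∑ j ∈ Finset.range k, 2 ^ (k - j) := by
    rw [Finset.sum_Ico_eq_sum_range, show 2*k - k = k by omega]
    refine Finset.sum_congr rfl (fun j hj => ?_)
    rw [Finset.mem_range] at hj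
    rw [Nat.min_eq_right (by omega), show 2*k - (k+j) = k - j by omega]
  have h3 : ∑ j ∈ Finset.range k, 2 ^ (k - j) = ∑ j ∈ Finset.range k, 2 ^ (j+1) := by
    rw [← Finset.sum_range_reflect (fun j => 2 ^ (j+1)) k]
    refine Finset.sum_congr rfl (fun j hj => ?_)
    rw [Finset.mem_range] at hj
    congr 1
    omega
  have h4 : ∑ j ∈ Finset.range k, 2 ^ (j+1) = 2 * (2^k - 1) := by
    simp_rw [pow_succ]
    rw [← Finset.sum_mul, pow2sum]
    have : 1 ≤ 2^k := Nat.one_le_two_pow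
    set A := 2^k
    omega
  rw [h1, h2, h3, h4, pow2sum]
  have : 1 ≤ 2^k := Nat.one_le_two_pow
  set A := 2^k
  omega

lemma wf_le {k : ℕ} (hk : 1 ≤ k) (i : Fin (2*k)) : wf (2*k) i ≤ 2 ^ k := by
  have := i.is_lt
  exact Nat.pow_le_pow_right (by omega) (by omega)

lemma wf_le' {k : ℕ} (hk : 1 ≤ k) {i : Fin (2*k)} (hi : i.val ≠ k) :
    wf (2*k) i ≤ 2 ^ (k-1) := by
  have := i.is_lt
  exact Nat.pow_le_pow_right (by omega) (by omega)

lemma pair_sum {k : ℕ} (hk : 1 ≤ k) {S : Finset (Fin (2*k))} (h : S.card ≤ 2) :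
    ∑ i ∈ S, wf (2*k) i ≤ 2 ^ k + 2 ^ (k-1) := by
  rcases show S.card = 0 ∨ S.card = 1 ∨ S.card = 2 by omega with hc | hc | hc
  · rw [Finset.card_eq_zero.mp hc]
    simp
  · obtain ⟨a, rfl⟩ := Finset.card_eq_one.mp hc
    rw [Finset.sum_singleton]
    exact le_trans (wf_le hk a) (Nat.le_add_right _ _)
  · obtain ⟨a, b, hab, rfl⟩ := Finset.card_eq_two.mp hc
    rw [Finset.sum_pair hab]
    have hval : a.val ≠ b.val := fun h => hab (Fin.ext h)
    by_cases ha : a.val = k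
    · have hb : b.val ≠ k := by omega
      exact Nat.add_le_add (wf_le hk a) (wf_le' hk hb)
    · calc wf (2*k) a + wf (2*k) b ≤ 2^(k-1) + 2^k :=
          Nat.add_le_add (wf_le' hk ha) (wf_le hk b)
        _ = 2^k + 2^(k-1) := Nat.add_comm _ _

lemma main {k : ℕ} (hk : 2 ≤ k) {m : ℕ} {c' : Fin (2*k) → ℕ}
    (hr : PebblingReach (cycleGraph (2*k)) (fun i => if (i : ℕ) = 0 then m else 0) c')
    {U : Set (Fin (2*k))} (hU : IsStrongHubSet (cycleGraph (2*k)) U) (hc : Covers c' U) :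
    2 ^ k + 2 ^ (k-1) - 3 ≤ m := by
  classical
  have hn : 2 ≤ 2*k := by omega
  have hΦ := reach_potential hn hr
  rw [sum_single hn m _ (by simp [wf])] at hΦ
  set S := univ.filter (fun i : Fin (2*k) => i ∉ U) with hS
  have hcard : S.card ≤ 2 := by
    apply pairwise_card (show 4 ≤ 2*k by omega)
    intro a ha b hb
    rw [hS, Finset.mem_filter] at ha hb
    exact hub_pair (by omega) hU ha.2 hb.2
  have hSsum := pair_sum (k := k) (by omega) hcard
  have hsplit : ∑ i ∈ univ.filter (fun i : Fin (2*k) => i ∈ U), wf (2*k) i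
      + ∑ i ∈ S, wf (2*k) i = ∑ i, wf (2*k) i := by
    rw [hS]
    exact Finset.sum_filter_add_sum_filter_not univ _ _
  have hcover : ∑ i ∈ univ.filter (fun i : Fin (2*k) => i ∈ U), wf (2*k) i
      ≤ ∑ i, c' i * wf (2*k) i := by
    calc ∑ i ∈ univ.filter (fun i : Fin (2*k) => i ∈ U), wf (2*k) i
        ≤ ∑ i ∈ univ.filter (fun i : Fin (2*k) => i ∈ U), c' i * wf (2*k) i := by
          refine Finset.sum_le_sum (fun i hi => ?_)
          have hiU : i ∈ U := (Finset.mem_filter.mp hi).2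
          have h1 : 1 ≤ c' i := hc i hiU
          calc wf (2*k) i = 1 * wf (2*k) i := (one_mul _).symm
            _ ≤ c' i * wf (2*k) i := Nat.mul_le_mul_right _ h1
      _ ≤ ∑ i, c' i * wf (2*k) i := Finset.sum_le_sum_of_subset (Finset.filter_subset _ _)
  have htot := total k (by omega)
  have hA : (2:ℕ)^k = 2*2^(k-1) := by
    conv_lhs => rw [show k = (k-1)+1 by omega]
    rw [pow_succ, mul_comm]
  have hB : 2 ≤ 2^(k-1) := by
    calc (2:ℕ) = 2^1 := rfl
      _ ≤ 2^(k-1) := Nat.pow_le_pow_right (by omega) (by omega)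
  rw [hA] at htot hSsum ⊢
  set A := 2^(k-1) with hAdef
  omega

lemma sum_single' {n : ℕ} (hn : 2 ≤ n) (m : ℕ) :
    ∑ i : Fin n, (if (i : ℕ) = 0 then m else 0) = m := by
  have := sum_single hn m (fun _ => 1) rfl
  simpa using this

end Stmt17Aux

/-- In `C_{2k}` (`k ≥ 2`), placing all `2^k + 2^(k-1) - 4` pebbles on one vertex, no
sequence of moves covers a strong hub set; hence `h_s^*(C_{2k}) ≥ 2^k + 2^(k-1) - 3`. -/
theorem stmt17 (k : ℕ) (hk : 2 ≤ k) :
    (¬ ∃ c' : Fin (2 * k) → ℕ,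
      PebblingReach (cycleGraph (2 * k))
        (fun i => if (i : ℕ) = 0 then 2 ^ k + 2 ^ (k - 1) - 4 else 0) c' ∧
      ∃ U, IsStrongHubSet (cycleGraph (2 * k)) U ∧ Covers c' U) ∧
    ∀ t : ℕ, (∀ c : Fin (2 * k) → ℕ, (∑ v, c v) = t →
        ∃ c', PebblingReach (cycleGraph (2 * k)) c c' ∧
          ∃ U, IsStrongHubSet (cycleGraph (2 * k)) U ∧ Covers c' U) →
      2 ^ k + 2 ^ (k - 1) - 3 ≤ t := by
  have hB : 2 ≤ 2^(k-1) := by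
    calc (2:ℕ) = 2^1 := rfl
      _ ≤ 2^(k-1) := Nat.pow_le_pow_right (by omega) (by omega)
  have hA : (2:ℕ)^k = 2*2^(k-1) := by
    conv_lhs => rw [show k = (k-1)+1 by omega]
    rw [pow_succ, mul_comm]
  constructor
  · rintro ⟨c', hr, U, hU, hc⟩
    have := Stmt17Aux.main hk hr hU hc
    omega
  · intro t ht
    obtain ⟨c', hr, U, hU, hc⟩ := ht (fun i => if (i : ℕ) = 0 then t else 0)
      (Stmt17Aux.sum_single' (by omega) t)
    exact Stmt17Aux.main hk hr hU hc
end

section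
/- For the odd cycle C_{2k+1} with k ≥ 2: if all 2^{k+1} - 4 pebbles are placed on the single vertex v_1, then no sequence of pebbling moves produces a configuration covering some strong hub set of C_{2k+1}. Hence h_s^*(C_{2k+1}) ≥ 2^{k+1} - 3. -/
open SimpleGraph

namespace Stmt18Aux

lemma fin_sub_val {n : ℕ} (u v : Fin (n+1)) :
    (u - v).val = if v.val ≤ u.val then u.val - v.val else u.val + (n+1) - v.val := by
  rw [Fin.sub_def]
  have hu := u.isLt; have hv := v.isLt
  simp only
  split_ifs with h
  · have he : (n+1) - v.val + u.val = (n+1) + (u.val - v.val) := by omega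
    rw [he, Nat.add_mod_left, Nat.mod_eq_of_lt (by omega)]
  · rw [Nat.mod_eq_of_lt (by omega)]
    omega

lemma adj_val {k : ℕ} (hk : 1 ≤ k) {u v : Fin (2*k+1)} :
    (cycleGraph (2*k+1)).Adj u v ↔
      (v.val = u.val + 1 ∨ u.val = v.val + 1 ∨ (u.val = 0 ∧ v.val = 2*k) ∨
        (v.val = 0 ∧ u.val = 2*k)) := by
  rw [cycleGraph_adj']
  rw [show ((u - v : Fin (2*k+1))).val = _ from fin_sub_val u v,
      show ((v - u : Fin (2*k+1))).val = _ from fin_sub_val v u]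
  have hu := u.isLt; have hv := v.isLt
  split_ifs <;> omega

def W (k : ℕ) (i : Fin (2*k+1)) : ℕ := 2 ^ min i.val (2*k+1 - i.val)

lemma W_le (k : ℕ) (i : Fin (2*k+1)) : W k i ≤ 2^k := by
  apply Nat.pow_le_pow_right (by norm_num)
  have := i.isLt; omega

lemma W_adj {k : ℕ} (hk : 1 ≤ k) {u v : Fin (2*k+1)}
    (h : (cycleGraph (2*k+1)).Adj u v) : W k v ≤ 2 * W k u := by
  have hu := u.isLt; have hv := v.isLt
  have hmin : min v.val (2*k+1 - v.val) ≤ min u.val (2*k+1 - u.val) + 1 := by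
    rcases (adj_val hk).mp h with h1 | h1 | h1 | h1 <;> omega
  calc W k v ≤ 2 ^ (min u.val (2*k+1 - u.val) + 1) := Nat.pow_le_pow_right (by norm_num) hmin
    _ = 2 * W k u := by rw [pow_succ, Nat.mul_comm]; rfl

def Phi (k : ℕ) (c : Fin (2*k+1) → ℕ) : ℕ := ∑ i, c i * W k i

lemma phi_move {k : ℕ} (hk : 1 ≤ k) {c c' : Fin (2*k+1) → ℕ}
    (h : PebblingMove (cycleGraph (2*k+1)) c c') : Phi k c' ≤ Phi k c := by
  obtain ⟨u, v, hadj, h2, rfl⟩ := h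
  have huv : u ≠ v := hadj.ne
  have hWv : W k v ≤ 2 * W k u := W_adj hk hadj
  have hfun : (fun w => (if w = u then c u - 2 else if w = v then c v + 1 else c w) * W k w)
      = Function.update (Function.update (fun w => c w * W k w) v ((c v + 1) * W k v)) u
          ((c u - 2) * W k u) := by
    funext w
    rcases eq_or_ne w u with rfl | h1 <;> rcases eq_or_ne w v with rfl | hh2 <;>
      simp_all [Function.update]
  show ∑ i, (if i = u then c u - 2 else if i = v then c v + 1 else c i) * W k i ≤ _
  rw [show (∑ i, (if i = u then c u - 2 else if i = v then c v + 1 else c i) * W k i)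
      = ∑ i, (Function.update (Function.update (fun w => c w * W k w) v ((c v + 1) * W k v)) u
          ((c u - 2) * W k u)) i from by rw [← hfun]]
  rw [Finset.sum_update_of_mem (Finset.mem_univ u)]
  rw [Finset.sum_update_of_mem (by simp [huv.symm] : v ∈ Finset.univ \ {u})]
  have hC : Phi k c = c u * W k u + (c v * W k v + ∑ i ∈ (Finset.univ \ {u}) \ {v}, c i * W k i) := by
    rw [Phi, ← Finset.sum_eq_add_sum_sdiff_singleton_of_mem (by simp [huv.symm] : v ∈ Finset.univ \ {u})
        (fun i => c i * W k i),
      ← Finset.sum_eq_add_sum_sdiff_singleton_of_mem (Finset.mem_univ u) (fun i => c i * W k i)]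
  rw [hC]
  have e1 : (c u - 2) * W k u + 2 * W k u = c u * W k u := by
    rw [← Nat.add_mul, Nat.sub_add_cancel h2]
  have e2 : (c v + 1) * W k v = c v * W k v + W k v := by ring
  omega

lemma phi_reach {k : ℕ} (hk : 1 ≤ k) {c c' : Fin (2*k+1) → ℕ}
    (h : PebblingReach (cycleGraph (2*k+1)) c c') : Phi k c' ≤ Phi k c := by
  induction h with
  | refl => exact le_rfl
  | tail _ hstep ih => exact le_trans (phi_move hk hstep) ih

lemma two_pow_sum (m : ℕ) : ∑ i ∈ Finset.range m, 2^i = 2^m - 1 := by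
  induction m with
  | zero => simp
  | succ m ih =>
    rw [Finset.sum_range_succ, ih, pow_succ]
    have := Nat.one_le_two_pow (n := m)
    omega

lemma sum_W (k : ℕ) : ∑ i, W k i = 2^(k+2) - 3 := by
  have h0 : (∑ i : Fin (2*k+1), W k i)
      = ∑ i ∈ Finset.range (2*k+1), 2 ^ min i (2*k+1 - i) :=
    Fin.sum_univ_eq_sum_range (fun j => 2 ^ min j (2*k+1 - j)) (2*k+1)
  rw [h0, show 2*k+1 = (k+1) + k from by omega, Finset.sum_range_add]
  have h1 : ∑ i ∈ Finset.range (k+1), 2 ^ min i ((k+1) + k - i)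
      = ∑ i ∈ Finset.range (k+1), 2^i := by
    refine Finset.sum_congr rfl fun i hi => ?_
    rw [Finset.mem_range] at hi; congr 1; omega
  have h2 : ∑ i ∈ Finset.range k, 2 ^ min ((k+1) + i) ((k+1) + k - ((k+1) + i))
      = ∑ i ∈ Finset.range k, 2^(k - i) := by
    refine Finset.sum_congr rfl fun i hi => ?_
    rw [Finset.mem_range] at hi; congr 1; omega
  have h4 : ∑ i ∈ Finset.range k, 2^(k - i) = ∑ i ∈ Finset.range k, 2^(i+1) := by
    calc ∑ i ∈ Finset.range k, 2^(k - i) = ∑ i ∈ Finset.range k, 2^((k-1-i)+1) := by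
          refine Finset.sum_congr rfl fun i hi => ?_
          rw [Finset.mem_range] at hi; congr 1; omega
      _ = ∑ i ∈ Finset.range k, 2^(i+1) := Finset.sum_range_reflect (fun j => 2^(j+1)) k
  have h5 : ∑ i ∈ Finset.range k, 2^(i+1) = 2 * (2^k - 1) := by
    simp only [pow_succ, Nat.mul_comm]
    rw [← Finset.mul_sum, two_pow_sum]
  rw [h1, h2, h4, h5, two_pow_sum]
  have := Nat.one_le_two_pow (n := k)
  have e1 : 2^(k+1) = 2 * 2^k := by rw [pow_succ]; ring
  have e2 : 2^(k+2) = 4 * 2^k := by rw [pow_succ, pow_succ]; ring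
  omega

lemma phi_init (k N : ℕ) : Phi k (fun i => if (i : ℕ) = 0 then N else 0) = N := by
  rw [Phi, Finset.sum_eq_single (0 : Fin (2*k+1))]
  · simp [W]
  · intro b _ hb
    rw [if_neg (fun h => hb (Fin.ext (by simpa using h))), Nat.zero_mul]
  · intro h; exact absurd (Finset.mem_univ _) h

end Stmt18Aux

namespace Stmt18Aux

lemma sep {k : ℕ} (hk : 2 ≤ k) {U : Set (Fin (2*k+1))}
    (hU : IsStrongHubSet (cycleGraph (2*k+1)) U)
    {a b : Fin (2*k+1)} (hab : a ≠ b)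
    (hnadj : ¬ (cycleGraph (2*k+1)).Adj a b) (ha : a ∉ U) (hb : b ∉ U) : False := by
  set m : ℕ := (b - a).val with hm_def
  have tinj : ∀ i j : Fin (2*k+1), (i - a).val = (j - a).val → i = j := by
    intro i j h
    have h2 : i - a = j - a := Fin.ext h
    exact sub_left_injective h2
  -- basic bounds on m
  have hAB : a.val ≠ b.val := fun h => hab (Fin.ext h)
  have hA := a.isLt; have hB := b.isLt
  have hnadj' : ¬((a - b).val = 1 ∨ (b - a).val = 1) := by rwa [cycleGraph_adj'] at hnadj
  have hm1 : 2 ≤ m ∧ m ≤ 2*k - 1 := by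
    have e1 : (b - a).val = if a.val ≤ b.val then b.val - a.val else b.val + (2*k+1) - a.val :=
      fin_sub_val b a
    have e2 : (a - b).val = if b.val ≤ a.val then a.val - b.val else a.val + (2*k+1) - b.val :=
      fin_sub_val a b
    rw [hm_def, e1]
    rw [e1, e2] at hnadj'
    push_neg at hnadj'
    split_ifs at hnadj' ⊢ <;> omega
  -- successor step
  have succ : ∀ i j : Fin (2*k+1), (j - i).val = 1 → j ≠ a → (j - a).val = (i - a).val + 1 := by
    intro i j h1 hja
    have key : j - a = (i - a) + (j - i) := by abel
    have hval : (j - a).val = ((i - a).val + 1) % (2*k+1) := by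
      rw [key, Fin.add_def, h1]
    have hlt : (i - a).val < 2*k+1 := (i - a).isLt
    rcases Nat.lt_or_ge ((i - a).val + 1) (2*k+1) with h | h
    · rw [Nat.mod_eq_of_lt h] at hval; exact hval
    · exfalso
      have : (i - a).val + 1 = 2*k+1 := by omega
      rw [this, Nat.mod_self] at hval
      exact hja (tinj j a (by simp [hval]))
  -- edge invariant
  have edge : ∀ i j : Fin (2*k+1), (cycleGraph (2*k+1)).Adj i j →
      i ≠ a → i ≠ b → j ≠ a → j ≠ b → ((i - a).val < m ↔ (j - a).val < m) := by
    intro i j hadj hia hib hja hjb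
    have hne : (i - a).val ≠ m := fun h => hib (tinj i b h)
    have hne' : (j - a).val ≠ m := fun h => hjb (tinj j b h)
    rcases cycleGraph_adj'.mp hadj with h | h
    · have := succ j i h hia; omega
    · have := succ i j h hja; omega
  -- walk invariant
  have walkinv : ∀ (x y : Fin (2*k+1)) (p : (cycleGraph (2*k+1)).Walk x y),
      (∀ v ∈ p.support, v ≠ a ∧ v ≠ b) → ((x - a).val < m ↔ (y - a).val < m) := by
    intro x y p
    induction p with
    | nil => intro _; rfl
    | @cons u v w h q ih =>
      intro hs
      have h1 : u ≠ a ∧ u ≠ b := hs u (by simp)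
      have h2 : ∀ z ∈ q.support, z ≠ a ∧ z ≠ b := fun z hz =>
        hs z (by simp [SimpleGraph.Walk.support_cons, hz])
      have h3 := h2 v q.start_mem_support
      exact (edge u v h h1.1 h1.2 h3.1 h3.2).trans (ih h2)
  -- the two separated vertices
  set x : Fin (2*k+1) := a + 1 with hx_def
  set y : Fin (2*k+1) := b + 1 with hy_def
  have hone : ((1 : Fin (2*k+1))).val = 1 := by
    rw [Fin.val_one']; exact Nat.mod_eq_of_lt (by omega)
  have hx : (x - a).val = 1 := by
    have : x - a = 1 := by rw [hx_def]; abel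
    rw [this, hone]
  have hy : (y - a).val = m + 1 := by
    have e : y - a = (b - a) + 1 := by rw [hy_def]; abel
    rw [e, Fin.add_def, hone, ← hm_def]
    exact Nat.mod_eq_of_lt (by omega)
  have ta : (a - a).val = 0 := by simp
  have hxa : x ≠ a := fun h => by rw [h] at hx; omega
  have hxb : x ≠ b := fun h => by rw [h] at hx; rw [← hm_def] at hx; omega
  have hya : y ≠ a := fun h => by rw [h] at hy; omega
  have hyb : y ≠ b := fun h => by rw [h] at hy; rw [← hm_def] at hy; omega
  have hxy : x ≠ y := fun h => by rw [h, hy] at hx; omega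
  obtain ⟨p, hpath, hint⟩ := hU.2 x y
  have htail_ne : p.support.tail ≠ [] := by
    intro h0
    have hyend := p.end_mem_support
    rw [p.support_eq_cons, h0] at hyend
    simp at hyend
    exact hxy hyend.symm
  have hsupp : ∀ v ∈ p.support, v ≠ a ∧ v ≠ b := by
    intro v hv
    rw [p.support_eq_cons] at hv
    rcases List.mem_cons.mp hv with rfl | hv'
    · exact ⟨hxa, hxb⟩
    · rw [← List.dropLast_append_getLast htail_ne] at hv'
      rcases List.mem_append.mp hv' with hdl | hlast
      · have hvU : v ∈ U := hint v hdl
        exact ⟨fun h => ha (h ▸ hvU), fun h => hb (h ▸ hvU)⟩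
      · have hvy : v = p.support.tail.getLast htail_ne := by simpa using hlast
        have hlast_eq : p.support.tail.getLast htail_ne = y := by
          rw [List.getLast_tail]
          exact p.getLast_support
        rw [hvy, hlast_eq]
        exact ⟨hya, hyb⟩
  have := walkinv x y p hsupp
  rw [hx, hy] at this
  omega

end Stmt18Aux

namespace Stmt18Aux

lemma hub_compl {k : ℕ} (hk : 2 ≤ k) {U : Set (Fin (2*k+1))}
    (hU : IsStrongHubSet (cycleGraph (2*k+1)) U)
    {x y z : Fin (2*k+1)} (hxy : x ≠ y) (hxz : x ≠ z) (hyz : y ≠ z)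
    (hx : x ∉ U) (hy : y ∉ U) (hz : z ∉ U) : False := by
  by_cases h1 : (cycleGraph (2*k+1)).Adj x y
  · by_cases h2 : (cycleGraph (2*k+1)).Adj x z
    · by_cases h3 : (cycleGraph (2*k+1)).Adj y z
      · rw [adj_val (by omega)] at h1 h2 h3
        have hxy' : x.val ≠ y.val := fun h => hxy (Fin.ext h)
        have hxz' : x.val ≠ z.val := fun h => hxz (Fin.ext h)
        have hyz' : y.val ≠ z.val := fun h => hyz (Fin.ext h)
        have := x.isLt; have := y.isLt; have := z.isLt
        omega
      · exact sep hk hU hyz h3 hy hz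
    · exact sep hk hU hxz h2 hx hz
  · exact sep hk hU hxy h1 hx hy

lemma key {k : ℕ} (hk : 2 ≤ k) (N : ℕ) (hN : N ≤ 2^(k+1) - 4) :
    ¬ ∃ c' : Fin (2*k+1) → ℕ,
      PebblingReach (cycleGraph (2*k+1)) (fun i => if (i : ℕ) = 0 then N else 0) c' ∧
      ∃ U, IsStrongHubSet (cycleGraph (2*k+1)) U ∧ Covers c' U := by
  classical
  rintro ⟨c', hreach, U, hU, hcov⟩
  have hphi : Phi k c' ≤ N := le_trans (phi_reach (by omega) hreach) (le_of_eq (phi_init k N))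
  set T : Finset (Fin (2*k+1)) := Finset.univ.filter (fun i => i ∈ U) with hT
  have hTcard : (Finset.univ.filter (fun i => i ∉ U)).card ≤ 2 := by
    by_contra hcard
    push_neg at hcard
    obtain ⟨x, y, z, hx, hy, hz, hxy, hxz, hyz⟩ := Finset.two_lt_card_iff.mp hcard
    rw [Finset.mem_filter] at hx hy hz
    exact hub_compl hk hU hxy hxz hyz hx.2 hy.2 hz.2
  have h4 : (4:ℕ) ≤ 2^k := by
    calc (4:ℕ) = 2^2 := rfl
      _ ≤ 2^k := Nat.pow_le_pow_right (by norm_num) hk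
  have hsumT : 2^(k+1) - 3 ≤ ∑ i ∈ T, W k i := by
    have h1 : ∑ i ∈ T, W k i + ∑ i ∈ Finset.univ.filter (fun i => i ∉ U), W k i
        = ∑ i, W k i := Finset.sum_filter_add_sum_filter_not Finset.univ _ _
    have h2 : ∑ i ∈ Finset.univ.filter (fun i => i ∉ U), W k i ≤ 2 * 2^k := by
      calc ∑ i ∈ Finset.univ.filter (fun i => i ∉ U), W k i
          ≤ (Finset.univ.filter (fun i => i ∉ U)).card • 2^k :=
            Finset.sum_le_card_nsmul _ _ _ (fun i _ => W_le k i)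
        _ ≤ 2 * 2^k := by rw [smul_eq_mul]; exact Nat.mul_le_mul_right _ hTcard
    rw [sum_W] at h1
    have e1 : 2^(k+1) = 2 * 2^k := by rw [pow_succ]; ring
    have e2 : 2^(k+2) = 4 * 2^k := by rw [pow_succ, pow_succ]; ring
    omega
  have hlow : ∑ i ∈ T, W k i ≤ Phi k c' := by
    calc ∑ i ∈ T, W k i ≤ ∑ i ∈ T, c' i * W k i := by
          refine Finset.sum_le_sum fun i hi => ?_
          have h1 : 1 ≤ c' i := hcov i (by simpa [hT] using (Finset.mem_filter.mp hi).2)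
          calc W k i = 1 * W k i := (Nat.one_mul _).symm
            _ ≤ c' i * W k i := Nat.mul_le_mul_right _ h1
      _ ≤ ∑ i, c' i * W k i := Finset.sum_le_sum_of_subset (Finset.filter_subset _ _)
      _ = Phi k c' := rfl
  have e1 : 2^(k+1) = 2 * 2^k := by rw [pow_succ]; ring
  omega

end Stmt18Aux

open Stmt18Aux

/-- In `C_{2k+1}` (`k ≥ 2`), placing all `2^(k+1) - 4` pebbles on one vertex, no
sequence of moves covers a strong hub set; hence `h_s^*(C_{2k+1}) ≥ 2^(k+1) - 3`. -/
theorem stmt18 (k : ℕ) (hk : 2 ≤ k) :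
    (¬ ∃ c' : Fin (2 * k + 1) → ℕ,
      PebblingReach (cycleGraph (2 * k + 1))
        (fun i => if (i : ℕ) = 0 then 2 ^ (k + 1) - 4 else 0) c' ∧
      ∃ U, IsStrongHubSet (cycleGraph (2 * k + 1)) U ∧ Covers c' U) ∧
    ∀ t : ℕ, (∀ c : Fin (2 * k + 1) → ℕ, (∑ v, c v) = t →
        ∃ c', PebblingReach (cycleGraph (2 * k + 1)) c c' ∧
          ∃ U, IsStrongHubSet (cycleGraph (2 * k + 1)) U ∧ Covers c' U) →
      2 ^ (k + 1) - 3 ≤ t := by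
  have h4 : (4:ℕ) ≤ 2^k := by
    calc (4:ℕ) = 2^2 := rfl
      _ ≤ 2^k := Nat.pow_le_pow_right (by norm_num) hk
  have e1 : 2^(k+1) = 2 * 2^k := by rw [pow_succ]; ring
  constructor
  · exact key hk _ le_rfl
  · intro t ht
    by_contra hlt
    push_neg at hlt
    have hsum : (∑ v : Fin (2*k+1), (if (v : ℕ) = 0 then t else 0)) = t := by
      rw [Finset.sum_eq_single (0 : Fin (2*k+1))]
      · simp
      · intro b _ hb
        rw [if_neg (fun h => hb (Fin.ext (by simpa using h)))]
      · intro h; exact absurd (Finset.mem_univ _) h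
    obtain ⟨c', hreach, U, hU, hcov⟩ := ht (fun i => if (i : ℕ) = 0 then t else 0) hsum
    exact key hk t (by omega) ⟨c', hreach, U, hU, hcov⟩
end
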